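/- arXiv:1302.3722 — 5 statements merged into one kernel-verified Lean document; each statement's English description precedes it below -/
import Mathlib

section
/- Let α ∈ (0,1/2], β, γ ∈ [0,1), and n ∈ ℕ. Set r = r(α,β,γ,n), u = r(α,β,{β+α},n) and v = r(α,γ,{γ+α},n), where {·} denotes the fractional part. Then, regarding the letters as integers 0 and 1, r_k = r_{k−1} + u_k − v_k for every k with 1 ≤ k ≤ n−1. (The words u and v are Sturmian words of slope α.) -/
open scoped Classical

/-- Membership of `x` in the circular interval `[β,γ)`: it means `β ≤ x < γ`
when `β < γ`; `x ≥ β` or `x < γ` when `γ < β`; and never holds when `β = γ`. -/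
def inCirc (β γ x : ℝ) : Prop :=
  if β < γ then β ≤ x ∧ x < γ
  else if γ < β then β ≤ x ∨ x < γ
  else False

/-- The rotation word `r(α,β,γ,n)` as a list of booleans of length `n`:
its `i`-th letter is `1` iff the fractional part `{iα}` lies in `[β,γ)`. -/
noncomputable def rotWord (α β γ : ℝ) (n : ℕ) : List Bool :=
  (List.range n).map fun i => if inCirc β γ (Int.fract (i * α)) then true else false

/-- The set `R(n)` of all rotation words of length `n`. -/
def RotWords (n : ℕ) : Set (List Bool) :=
  {w | ∃ α ∈ Set.Ico (0:ℝ) 1, ∃ β ∈ Set.Ico (0:ℝ) 1, ∃ γ ∈ Set.Ico (0:ℝ) 1,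
    w = rotWord α β γ n}

/-- `numRot n = f(n)` is the number of binary rotation words of length `n`. -/
noncomputable def numRot (n : ℕ) : ℕ := (RotWords n).ncard

/-- The set `St(n,α)` of Sturmian words of length `n` and slope `α`:
rotation words `r(α,β,{β+α},n)`, `β ∈ [0,1)`. -/
def St (n : ℕ) (α : ℝ) : Set (List Bool) :=
  {w | ∃ β ∈ Set.Ico (0:ℝ) 1, w = rotWord α β (Int.fract (β + α)) n}

/-!
Both sides depend on `kα` only through its class in `ℝ/ℤ`. There the letter `r_{k-1}` is the
indicator of the arc `[β, γ)` rotated by `α`, and rotating an arc by `α` removes the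
arc `[β, β + α)` at its start and adds the arc `[γ, γ + α)` at its end; the letters of `u` and `v`
are the indicators of these two arcs.
-/

section FloorRing

variable {R : Type*} [CommRing R] [LinearOrder R] [IsStrictOrderedRing R] [FloorRing R]

lemma Int.fract_mem_Ico (x : R) : Int.fract x ∈ Set.Ico 0 1 :=
  ⟨Int.fract_nonneg x, Int.fract_lt_one x⟩

lemma Int.fract_sub_congr {a a' b b' : R} (ha : Int.fract a = Int.fract a')
    (hb : Int.fract b = Int.fract b') : Int.fract (a - b) = Int.fract (a' - b') := by
  rw [Int.fract_eq_fract] at *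
  obtain ⟨m, hm⟩ := ha
  obtain ⟨l, hl⟩ := hb
  exact ⟨m - l, by push_cast; rw [← hm, ← hl]; abel⟩

lemma Int.fract_sub_of_mem_Ico {s a : R} (hs : s ∈ Set.Ico 0 1) (ha : a ∈ Set.Ico 0 1) :
    Int.fract (s - a) = if a ≤ s then s - a else s - a + 1 := by
  obtain ⟨hs0, hs1⟩ := hs
  obtain ⟨ha0, ha1⟩ := ha
  split_ifs with h
  · exact Int.fract_eq_self.2 ⟨sub_nonneg.2 h, by linarith⟩
  · rw [← Int.fract_add_one, Int.fract_eq_self]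
    constructor <;> linarith

end FloorRing

/-- The half-open arc of `ℝ/ℤ` from `β` to `γ`, as a `1`-periodic subset of `ℝ`;
unlike `inCirc`, it makes sense for arbitrary representatives `β`, `γ`, `x`. -/
def arc (β γ : ℝ) : Set ℝ := {x | Int.fract (x - β) < Int.fract (γ - β)}

lemma fract_mem_arc {β γ x : ℝ} : Int.fract x ∈ arc β γ ↔ x ∈ arc β γ := by
  simp only [arc, Set.mem_ofPred_eq, Int.fract_sub_congr (Int.fract_fract x) rfl]

lemma arc_fract_right (β γ : ℝ) : arc β (Int.fract γ) = arc β γ := by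
  simp only [arc, Int.fract_sub_congr (Int.fract_fract γ) rfl]

lemma inCirc_iff_mem_arc {β γ x : ℝ} (hβ : β ∈ Set.Ico 0 1) (hγ : γ ∈ Set.Ico 0 1)
    (hx : x ∈ Set.Ico 0 1) : inCirc β γ x ↔ x ∈ arc β γ := by
  rw [arc, Set.mem_ofPred_eq, Int.fract_sub_of_mem_Ico hx hβ, Int.fract_sub_of_mem_Ico hγ hβ,
    inCirc]
  obtain ⟨hβ0, hβ1⟩ := hβ
  obtain ⟨hγ0, hγ1⟩ := hγ
  obtain ⟨hx0, hx1⟩ := hx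
  split_ifs <;> grind

lemma toNat_getD_rotWord {α β γ : ℝ} {n k : ℕ} (hβ : β ∈ Set.Ico 0 1)
    (hγ : γ ∈ Set.Ico 0 1) (hk : k < n) :
    (((rotWord α β γ n).getD k false).toNat : ℤ) = (arc β γ).indicator 1 (k * α) := by
  simp only [rotWord, Bool.if_false_right, Bool.and_true, List.pure_def, List.bind_eq_flatMap,
    ← List.map_eq_flatMap, List.map_map, List.getD_eq_getElem?_getD, List.length_map,
    List.length_range, hk, getElem?_pos, List.getElem_map, List.getElem_range,
    Function.comp_apply, Option.getD_some, inCirc_iff_mem_arc hβ hγ (Int.fract_mem_Ico _),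
    fract_mem_arc, Set.indicator_apply]
  by_cases h : (k : ℝ) * α ∈ arc β γ <;> simp [h]

lemma indicator_arc_sub_indicator_arc_sub (β γ a x : ℝ) :
    (arc β γ).indicator (1 : ℝ → ℤ) x - (arc β γ).indicator 1 (x - a) =
      (arc β (β + a)).indicator 1 x - (arc γ (γ + a)).indicator 1 x := by
  set s := Int.fract (x - β)
  set L := Int.fract (γ - β)
  set A := Int.fract a
  have hs : s ∈ Set.Ico 0 1 := Int.fract_mem_Ico _
  have hL : L ∈ Set.Ico 0 1 := Int.fract_mem_Ico _
  have hA : A ∈ Set.Ico 0 1 := Int.fract_mem_Ico _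
  have hshift : Int.fract (x - a - β) = Int.fract (s - A) := by
    rw [sub_right_comm]
    exact Int.fract_sub_congr (Int.fract_fract _).symm (Int.fract_fract _).symm
  have hend : Int.fract (x - γ) = Int.fract (s - L) := by
    rw [show x - γ = (x - β) - (γ - β) by ring]
    exact Int.fract_sub_congr (Int.fract_fract _).symm (Int.fract_fract _).symm
  simp only [Set.indicator_apply, arc, Set.mem_ofPred_eq, add_sub_cancel_left, hshift, hend,
    Int.fract_sub_of_mem_Ico hs hA, Int.fract_sub_of_mem_Ico hs hL]
  obtain ⟨hs0, hs1⟩ := hs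
  obtain ⟨hL0, hL1⟩ := hL
  obtain ⟨hA0, hA1⟩ := hA
  split_ifs <;> first | rfl | (exfalso; linarith)

theorem rotation_from_sturmian_pair_general (α β γ : ℝ) (n : ℕ)
    (hβ : β ∈ Set.Ico (0:ℝ) 1)
    (hγ : γ ∈ Set.Ico (0:ℝ) 1) :
    ∀ k : ℕ, 1 ≤ k → k ≤ n - 1 →
      (((rotWord α β γ n).getD k false).toNat : ℤ) =
        (((rotWord α β γ n).getD (k - 1) false).toNat : ℤ)
          + (((rotWord α β (Int.fract (β + α)) n).getD k false).toNat : ℤ)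
          - (((rotWord α γ (Int.fract (γ + α)) n).getD k false).toNat : ℤ) := by
  intro k hk hkn
  rw [toNat_getD_rotWord hβ hγ (by omega), toNat_getD_rotWord hβ hγ (by omega),
    toNat_getD_rotWord hβ (Int.fract_mem_Ico _) (by omega),
    toNat_getD_rotWord hγ (Int.fract_mem_Ico _) (by omega),
    arc_fract_right, arc_fract_right, Nat.cast_sub hk, Nat.cast_one, sub_mul, one_mul]
  linarith [indicator_arc_sub_indicator_arc_sub β γ α (k * α)]

/-- For `α ∈ (0,1/2]`, `β,γ ∈ [0,1)`, setting `r = r(α,β,γ,n)`,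
`u = r(α,β,{β+α},n)` and `v = r(α,γ,{γ+α},n)` (Sturmian words of slope `α`),
we have `r_k = r_{k-1} + u_k - v_k` for every `1 ≤ k ≤ n-1`. -/
theorem rotation_from_sturmian_pair (α β γ : ℝ) (n : ℕ)
    (hα : α ∈ Set.Ioc (0:ℝ) (1/2 : ℝ)) (hβ : β ∈ Set.Ico (0:ℝ) 1)
    (hγ : γ ∈ Set.Ico (0:ℝ) 1) :
    ∀ k : ℕ, 1 ≤ k → k ≤ n - 1 →
      (((rotWord α β γ n).getD k false).toNat : ℤ) =
        (((rotWord α β γ n).getD (k - 1) false).toNat : ℤ)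
          + (((rotWord α β (Int.fract (β + α)) n).getD k false).toNat : ℤ)
          - (((rotWord α γ (Int.fract (γ + α)) n).getD k false).toNat : ℤ) :=
  rotation_from_sturmian_pair_general α β γ n hβ hγ
end

section
/- Let r be a binary word of length n+1 containing both 00 and 11 as factors, and suppose the ordered pair (u,v) generates r, where u, v ∈ St(n,α) for some common slope α ∈ (0,1/2). Then (u,v) is uniquely determined by r: for every 0 ≤ k ≤ n−1, if r_k = r_{k+1} = 1 then u_k = v_k = 0, and otherwise u_k = r_{k+1} and v_k = r_k. In particular, r is generated by exactly one such pair. -/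
open scoped Classical

/-- The ordered pair `(u,v)` of words of length `n` generates the word `r` of
length `n+1`: regarding letters as integers, `r_{k+1} = r_k + u_k - v_k`
for every `0 ≤ k ≤ n-1`. -/
def Generates (u v r : List Bool) : Prop :=
  ∀ k, k < u.length →
    ((r.getD (k+1) false).toNat : ℤ) =
      ((r.getD k false).toNat : ℤ) + ((u.getD k false).toNat : ℤ)
        - ((v.getD k false).toNat : ℤ)

/-!
Write `u_k = [fract (k α - b) < α]` and `v_k = [fract (k α - c) < α]`, and let
`δ = fract (c - b)`. A floor-function telescoping shows that `u_k - v_k = w_{k+1} - w_k`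
for the rotation word `w_k = [fract ((k - 1) α - b) < δ]`, so `r - w` is constant; as `r`
contains both letters, `r = w`. A factor `11` of `w` forces `α < δ` and a factor `00` forces
`δ < 1 - α` (here `α < 1/2` is used), so the windows `[b, b + α)` and `[c, c + α)` are disjoint
modulo `1` and `u_k = v_k = 1` never happens. Then `r_{k+1} = r_k + u_k - v_k` determines
`u_k` and `v_k`.
-/

open Int Set

namespace Int

variable {R : Type*} [Field R] [LinearOrder R] [IsStrictOrderedRing R] [FloorRing R]

theorem fract_add_eq_ite (y : R) {b : R} (hb₀ : 0 ≤ b) (hb₁ : b < 1) :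
    fract (y + b) = if fract y + b < 1 then fract y + b else fract y + b - 1 := by
  have hy₀ := fract_nonneg y
  have hy₁ := fract_lt_one y
  have hy := fract_add_floor y
  rw [fract_eq_iff]
  split_ifs with h
  · exact ⟨by linarith, h, ⌊y⌋, by linarith⟩
  · exact ⟨by linarith, by linarith, ⌊y⌋ + 1, by push_cast; linarith⟩

theorem fract_sub_eq_ite (y : R) {b : R} (hb₀ : 0 ≤ b) (hb₁ : b < 1) :
    fract (y - b) = if b ≤ fract y then fract y - b else fract y - b + 1 := by
  have hy₀ := fract_nonneg y
  have hy₁ := fract_lt_one y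
  have hy := fract_add_floor y
  rw [fract_eq_iff]
  split_ifs with h
  · exact ⟨by linarith, by linarith, ⌊y⌋, by linarith⟩
  · exact ⟨by linarith, by linarith, ⌊y⌋ - 1, by push_cast; linarith⟩

theorem fract_sub_fract_sub (x b c : R) : fract (x - c) = fract (x - b - fract (c - b)) := by
  rw [← self_sub_floor (c - b), show x - b - (c - b - ⌊c - b⌋) = x - c + ⌊c - b⌋ by ring,
    fract_add_intCast]

end Int

section FractIndicator

variable {R : Type*} [Field R] [LinearOrder R] [FloorRing R]

/-- The `k`-th letter of the Sturmian word of slope `α` and intercept `β` is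
`fractInd α (k * α - β)`. -/
def fractInd (θ x : R) : ℤ := if fract x < θ then 1 else 0

theorem natCast_toNat_eq_fractInd_iff {x : Bool} {θ y : R} :
    (x.toNat : ℤ) = fractInd θ y ↔ x = decide (fract y < θ) := by
  unfold fractInd
  by_cases h : fract y < θ <;> cases x <;> simp [h]

theorem fractInd_nonneg (θ x : R) : 0 ≤ fractInd θ x := by
  unfold fractInd; split_ifs <;> simp

theorem fractInd_le_one (θ x : R) : fractInd θ x ≤ 1 := by
  unfold fractInd; split_ifs <;> simp

variable [IsStrictOrderedRing R]

theorem floor_sub_floor_sub_eq_fractInd (s : R) {θ : R} (hθ₀ : 0 ≤ θ) (hθ₁ : θ < 1) :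
    ⌊s⌋ - ⌊s - θ⌋ = fractInd θ s := by
  have h : ((⌊s⌋ - ⌊s - θ⌋ : ℤ) : R) = θ - fract s + fract (s - θ) := by
    push_cast; rw [← self_sub_floor s, ← self_sub_floor (s - θ)]; ring
  rw [fract_sub_eq_ite s hθ₀ hθ₁] at h
  apply cast_injective (α := R)
  rw [h, fractInd]
  split_ifs <;> push_cast <;> linarith

theorem floor_sub_sub_floor_sub (s b c : R) :
    ⌊s - b⌋ - ⌊s - c⌋ = ⌊c - b⌋ + fractInd (fract (c - b)) (s - b) := by
  have hc : s - c = s - b - fract (c - b) - ⌊c - b⌋ := by rw [← self_sub_floor (c - b)]; ring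
  rw [hc, floor_sub_intCast, ← floor_sub_floor_sub_eq_fractInd _ (fract_nonneg _) (fract_lt_one _)]
  ring

/-- The letterwise difference of the Sturmian words of slope `α` and intercepts `b`, `c` is the
first difference of the rotation word with intercept `b` and window length `fract (c - b)`. -/
theorem fractInd_sub_fractInd {α : R} (hα₀ : 0 ≤ α) (hα₁ : α < 1) (t b c : R) :
    fractInd α (t - b) - fractInd α (t - c) =
      fractInd (fract (c - b)) (t - b) - fractInd (fract (c - b)) (t - α - b) := by
  have ht := floor_sub_sub_floor_sub t b c
  have htα := floor_sub_sub_floor_sub (t - α) b c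
  rw [← floor_sub_floor_sub_eq_fractInd _ hα₀ hα₁, ← floor_sub_floor_sub_eq_fractInd _ hα₀ hα₁,
    sub_right_comm t b α, sub_right_comm t c α]
  linarith

theorem lt_of_fract_lt_of_fract_add_lt {y α δ : R} (hα₀ : 0 ≤ α) (hα : 2 * α ≤ 1)
    (hy : fract y < δ) (hyα : fract (y + α) < δ) : α < δ := by
  have := fract_nonneg y
  rw [fract_add_eq_ite y hα₀ (by linarith)] at hyα
  split_ifs at hyα <;> linarith

theorem lt_one_sub_of_le_fract_of_le_fract_add {y α δ : R} (hα₀ : 0 ≤ α) (hα : 2 * α ≤ 1)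
    (hy : δ ≤ fract y) (hyα : δ ≤ fract (y + α)) : δ < 1 - α := by
  have := fract_lt_one y
  rw [fract_add_eq_ite y hα₀ (by linarith)] at hyα
  split_ifs at hyα <;> linarith

theorem not_fract_sub_lt_and_fract_sub_lt {α b c : R} (hlo : α ≤ fract (c - b))
    (hhi : fract (c - b) ≤ 1 - α) (t : R) : ¬ (fract (t - b) < α ∧ fract (t - c) < α) := by
  rintro ⟨hb, hc⟩
  rw [fract_sub_fract_sub t b c, fract_sub_eq_ite _ (fract_nonneg _) (fract_lt_one _)] at hc
  split_ifs at hc <;> linarith [fract_nonneg (t - b)]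

end FractIndicator

theorem inCirc_iff_fract_sub_lt {β γ x : ℝ} (hβ : β ∈ Ico (0 : ℝ) 1) (hγ : γ ∈ Ico (0 : ℝ) 1)
    (hx : x ∈ Ico (0 : ℝ) 1) : inCirc β γ x ↔ fract (x - β) < fract (γ - β) := by
  rw [fract_sub_eq_ite x hβ.1 hβ.2, fract_sub_eq_ite γ hβ.1 hβ.2, fract_eq_self.2 hx,
    fract_eq_self.2 hγ, inCirc]
  have := hx.1
  have := hγ.2
  grind

theorem rotWord_getD (α β γ : ℝ) {n k : ℕ} (hk : k < n) :
    (rotWord α β γ n).getD k false = decide (inCirc β γ (fract (k * α))) := by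
  simp [rotWord, ← List.map_eq_flatMap, hk]

theorem St.exists_getD_eq {n : ℕ} {α : ℝ} (hα : α ∈ Ico (0 : ℝ) 1) {w : List Bool}
    (hw : w ∈ St n α) : ∃ β : ℝ, ∀ k < n, w.getD k false = decide (fract (k * α - β) < α) := by
  obtain ⟨β, hβ, rfl⟩ := hw
  refine ⟨β, fun k hk => ?_⟩
  have hγ : fract (fract (β + α) - β) = α := by
    rw [← self_sub_floor (β + α), sub_right_comm, add_sub_cancel_left, fract_sub_intCast,
      fract_eq_self.2 hα]
  have hx : fract (fract (k * α) - β) = fract (k * α - β) := by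
    rw [← self_sub_floor (k * α), sub_right_comm, fract_sub_intCast]
  rw [rotWord_getD _ _ _ hk, inCirc_iff_fract_sub_lt hβ ⟨fract_nonneg _, fract_lt_one _⟩
    ⟨fract_nonneg _, fract_lt_one _⟩, hγ, hx]

theorem St.length_eq {n : ℕ} {α : ℝ} {w : List Bool} (hw : w ∈ St n α) : w.length = n := by
  obtain ⟨β, -, rfl⟩ := hw
  simp [rotWord]

theorem List.IsInfix.exists_getD_pair {α : Type*} {x y d : α} {l : List α} (h : [x, y] <:+: l) :
    ∃ j, j + 2 ≤ l.length ∧ l.getD j d = x ∧ l.getD (j + 1) d = y := by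
  obtain ⟨s, t, rfl⟩ := h
  refine ⟨s.length, by simp, ?_, ?_⟩ <;> simp [List.getD_eq_getElem?_getD]

theorem List.eq_of_getD_eq {α : Type*} {l l' : List α} {n : ℕ} {d : α} (hl : l.length = n)
    (hl' : l'.length = n) (h : ∀ k < n, l.getD k d = l'.getD k d) : l = l' :=
  List.ext_getElem (hl.trans hl'.symm) fun k hk hk' => by
    simpa [List.getD_eq_getElem, hk, hk'] using h k (hl ▸ hk)

theorem eq_of_sub_succ_eq_sub_succ {f g : ℕ → ℤ} {n i j : ℕ}
    (hg₀ : ∀ k, 0 ≤ g k) (hg₁ : ∀ k, g k ≤ 1) (hfg : ∀ k < n, f (k + 1) - f k = g (k + 1) - g k)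
    (hi : i ≤ n) (hfi : f i = 0) (hj : j ≤ n) (hfj : f j = 1) : ∀ k ≤ n, f k = g k := by
  have hconst : ∀ k ≤ n, f k - g k = f 0 - g 0 := by
    intro k hk
    induction k with
    | zero => rfl
    | succ k ih => linarith [hfg k hk, ih (by omega)]
  intro k hk
  linarith [hconst i hi, hconst j hj, hconst k hk, hg₀ i, hg₁ j]

theorem Generates.getD_eq_decide_fract_lt {n : ℕ} {r u v : List Bool} {α b c : ℝ}
    (hα₀ : 0 ≤ α) (hα₁ : α < 1) (hul : u.length = n)
    (hu : ∀ k < n, u.getD k false = decide (fract (k * α - b) < α))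
    (hv : ∀ k < n, v.getD k false = decide (fract (k * α - c) < α))
    (hgen : Generates u v r) {i j : ℕ} (hi : i ≤ n) (hri : r.getD i false = false)
    (hj : j ≤ n) (hrj : r.getD j false = true) :
    ∀ k ≤ n, r.getD k false = decide (fract ((k - 1) * α - b) < fract (c - b)) := by
  have hr : ∀ k ≤ n, ((r.getD k false).toNat : ℤ) = fractInd (fract (c - b)) ((k - 1) * α - b) := by
    refine eq_of_sub_succ_eq_sub_succ (fun _ => fractInd_nonneg _ _) (fun _ => fractInd_le_one _ _)
      (fun k hk => ?_) hi (by rw [hri]; rfl) hj (by rw [hrj]; rfl)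
    have hk' : (((k + 1 : ℕ) : ℝ) - 1) * α - b = k * α - b := by push_cast; ring
    rw [hgen k (hul ▸ hk), natCast_toNat_eq_fractInd_iff.2 (hu k hk),
      natCast_toNat_eq_fractInd_iff.2 (hv k hk), hk', sub_one_mul]
    linarith [fractInd_sub_fractInd hα₀ hα₁ (k * α) b c]
  exact fun k hk => natCast_toNat_eq_fractInd_iff.1 (hr k hk)

theorem Bool.ite_of_toNat_eq_add_sub {a b x y : Bool}
    (h : (b.toNat : ℤ) = a.toNat + x.toNat - y.toNat) (hxy : ¬ (x = true ∧ y = true)) :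
    if a = true ∧ b = true then x = false ∧ y = false else x = b ∧ y = a := by
  cases a <;> cases b <;> cases x <;> cases y <;> simp_all

theorem Generates.not_getD_and_getD_of_mem_St {n : ℕ} {r u v : List Bool} {α : ℝ}
    (hr : r.length = n + 1) (hα : α ∈ Ioo (0 : ℝ) (1 / 2)) (hu : u ∈ St n α) (hv : v ∈ St n α)
    (hgen : Generates u v r) (h00 : [false, false] <:+: r) (h11 : [true, true] <:+: r) :
    ∀ k < n, ¬ (u.getD k false = true ∧ v.getD k false = true) := by
  obtain ⟨hα₀, hα₁⟩ := hα
  obtain ⟨b, hb⟩ := St.exists_getD_eq ⟨hα₀.le, by linarith⟩ hu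
  obtain ⟨c, hc⟩ := St.exists_getD_eq ⟨hα₀.le, by linarith⟩ hv
  obtain ⟨i, hi, hri, hri'⟩ := h00.exists_getD_pair (d := false)
  obtain ⟨j, hj, hrj, hrj'⟩ := h11.exists_getD_pair (d := false)
  have hrδ := hgen.getD_eq_decide_fract_lt hα₀.le (by linarith) (St.length_eq hu) hb hc
    (by omega) hri (by omega) hrj
  have hshift (k : ℕ) : ((k : ℝ) - 1) * α - b + α = (((k + 1 : ℕ) : ℝ) - 1) * α - b := by
    push_cast; ring
  have hlo : α < fract (c - b) := by
    refine lt_of_fract_lt_of_fract_add_lt (y := (j - 1) * α - b) hα₀.le (by linarith) ?_ ?_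
    · exact of_decide_eq_true ((hrδ j (by omega)).symm.trans hrj)
    · rw [hshift]; exact of_decide_eq_true ((hrδ (j + 1) (by omega)).symm.trans hrj')
  have hhi : fract (c - b) < 1 - α := by
    refine lt_one_sub_of_le_fract_of_le_fract_add (y := (i - 1) * α - b) hα₀.le (by linarith) ?_ ?_
    · exact not_lt.1 (of_decide_eq_false ((hrδ i (by omega)).symm.trans hri))
    · rw [hshift]; exact not_lt.1 (of_decide_eq_false ((hrδ (i + 1) (by omega)).symm.trans hri'))
  rintro k hk ⟨huk, hvk⟩
  refine not_fract_sub_lt_and_fract_sub_lt hlo.le hhi.le (k * α) ⟨?_, ?_⟩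
  · exact of_decide_eq_true ((hb k hk).symm.trans huk)
  · exact of_decide_eq_true ((hc k hk).symm.trans hvk)

theorem Generates.getD_eq_ite_of_mem_St {n : ℕ} {r u v : List Bool} {α : ℝ}
    (hr : r.length = n + 1) (hα : α ∈ Ioo (0 : ℝ) (1 / 2)) (hu : u ∈ St n α) (hv : v ∈ St n α)
    (hgen : Generates u v r) (h00 : [false, false] <:+: r) (h11 : [true, true] <:+: r) :
    ∀ k < n, if r.getD k false = true ∧ r.getD (k + 1) false = true then
        u.getD k false = false ∧ v.getD k false = false
      else u.getD k false = r.getD (k + 1) false ∧ v.getD k false = r.getD k false :=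
  fun k hk => Bool.ite_of_toNat_eq_add_sub (hgen k (by rwa [St.length_eq hu]))
    (hgen.not_getD_and_getD_of_mem_St hr hα hu hv h00 h11 k hk)

/-- If a word `r` of length `n+1` contains both `00` and `11` as factors and is
generated by a pair `(u,v)` of Sturmian words of a common slope `α ∈ (0,1/2)`,
then `(u,v)` is uniquely determined by `r`: for every `0 ≤ k ≤ n-1`, if
`r_k = r_{k+1} = 1` then `u_k = v_k = 0`, and otherwise `u_k = r_{k+1}` and
`v_k = r_k`; in particular `r` is generated by exactly one such pair. -/
theorem unique_pair_of_00_and_11 (n : ℕ) (r u v : List Bool) (α : ℝ)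
    (hr : r.length = n + 1) (hα : α ∈ Set.Ioo (0:ℝ) (1/2 : ℝ))
    (hu : u ∈ St n α) (hv : v ∈ St n α) (hgen : Generates u v r)
    (h00 : [false, false] <:+: r) (h11 : [true, true] <:+: r) :
    (∀ k, k < n →
      if r.getD k false = true ∧ r.getD (k + 1) false = true then
        u.getD k false = false ∧ v.getD k false = false
      else
        u.getD k false = r.getD (k + 1) false ∧ v.getD k false = r.getD k false) ∧
    ∀ u' v' : List Bool, ∀ α' : ℝ, α' ∈ Set.Ioo (0:ℝ) (1/2 : ℝ) →
      u' ∈ St n α' → v' ∈ St n α' → Generates u' v' r → u' = u ∧ v' = v := by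
  have hspec := hgen.getD_eq_ite_of_mem_St hr hα hu hv h00 h11
  refine ⟨hspec, fun u' v' α' hα' hu' hv' hgen' => ?_⟩
  have hspec' := hgen'.getD_eq_ite_of_mem_St hr hα' hu' hv' h00 h11
  have hletters (k : ℕ) (hk : k < n) :
      u'.getD k false = u.getD k false ∧ v'.getD k false = v.getD k false := by
    have h := hspec k hk
    have h' := hspec' k hk
    split_ifs at h h' <;> grind
  exact ⟨List.eq_of_getD_eq (St.length_eq hu') (St.length_eq hu) fun k hk => (hletters k hk).1,
    List.eq_of_getD_eq (St.length_eq hv') (St.length_eq hv) fun k hk => (hletters k hk).2⟩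
end

section
/- Let d = (d_1, d_2, …) be a directive sequence of positive integers, let u, v ∈ Fac(d) be binary words of length n, and let r be a binary word of length n+1 generated by the ordered pair (u,v). If r contains a factor 0 1 0^{k₁} 1 0^{k₂} 1 with k₂ > k₁ > 0, then there exists m ≥ 1 such that k₁ = l_m − 1 and (k₂ + 1) mod l_m = l_{m−1}. -/
/-- `stdWord d (n+1)` is the standard word `s_n` for the directive sequence
`(d 1, d 2, …)`: `stdWord d 0 = s_{-1} = 1`, `stdWord d 1 = s_0 = 0`,
and `s_n = s_{n-1}^{d_n} s_{n-2}` for `n ≥ 1`. -/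
def stdWord (d : ℕ → ℕ) : ℕ → List Bool
  | 0 => [true]
  | 1 => [false]
  | (n + 2) => (List.replicate (d (n + 1)) (stdWord d (n + 1))).flatten ++ stdWord d n

/-- `stdLen d (n+1)` is the length `l_n` of the standard word `s_n`;
so `l_{-1} = l_0 = 1` and `l_n = d_n l_{n-1} + l_{n-2}`. -/
def stdLen (d : ℕ → ℕ) : ℕ → ℕ
  | 0 => 1
  | 1 => 1
  | (n + 2) => d (n + 1) * stdLen d (n + 1) + stdLen d n

/-- `Fac d` is the Sturmian language `St(α_d)` of the directive sequence `d`: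
all factors of the standard words `s_n`, `n ≥ 0`. -/
def Fac (d : ℕ → ℕ) : Set (List Bool) :=
  {w | ∃ m : ℕ, w <:+: stdWord d (m + 1)}

/-!
Below an occurrence of `0 1 0^k₁ 1 0^k₂ 1` in `r`, the generation rule forces `v` to contain
`X = 0 1c0 1c'0` and `u` to contain `0c1 0c'1`, hence `Y = 0c1 0c'1 0`, where `|c| = k₁ - 1` and
`|c'| = k₂ - 1` (`TwinFactors d c c'`).

The standard words of `d` are the images of those of the shifted sequence under the morphism
`φ : 0 ↦ 0^(d₁) 1, 1 ↦ 0`, so a factor `1 A` with `A` ending in `1` has `A = φ Z` with `0 Z`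
a factor one level up. Desubstituting `X` and `Y` either ends in the base case `c = 0^(d₁-1)`,
where `c' = φ(0^q) 0^(d₁)`, or gives `c = φ(C) 0^(d₁)` and `c' = φ(C') 0^(d₁)` with
`TwinFactors` for `(C, C')` one level up. By induction on `|c|`, `c 01` is a permutation of some
`s_m` and `c' 01` of `s_m^t s_(m-1)`; comparing lengths gives `k₁ + 1 = l_m` and
`k₂ + 1 = t l_m + l_(m-1)`.
-/

open List

lemma replicate_append_true_inj {g g' : ℕ} {q q' : List Bool}
    (h : replicate g false ++ true :: q = replicate g' false ++ true :: q') : g = g' ∧ q = q' := by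
  induction g generalizing g' with
  | zero => cases g' <;> simp_all [replicate_succ]
  | succ g ih =>
    cases g' with
    | zero => simp [replicate_succ] at h
    | succ g' => simpa [replicate_succ] using ih (by simpa [replicate_succ] using h)

lemma cons_eq_replicate_iff_append_singleton_eq {α : Type*} {x : α} {l : List α} {n : ℕ} :
    x :: l = replicate n x ↔ l ++ [x] = replicate n x := by
  simp [eq_replicate_iff, or_comm]

lemma prefix_replicate_of_cons_eq {α : Type*} {x : α} {l : List α} {n : ℕ}
    (h : x :: l = replicate n x) : l <+: replicate n x :=
  cons_eq_replicate_iff_append_singleton_eq.mp h ▸ prefix_append _ _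

lemma getLast?_eq_some_of_prefix_replicate {α : Type*} {x : α} {A : List α} {n : ℕ}
    (h : A <+: replicate n x) (hA : A ≠ []) : A.getLast? = some x := by
  rw [(prefix_replicate_iff.mp h).2, getLast?_replicate, if_neg (by simpa using hA)]

lemma exists_eq_replicate_append_true_cons {w : List Bool} (h : true ∈ w) :
    ∃ e w', w = replicate e false ++ true :: w' := by
  induction w with
  | nil => simp at h
  | cons b w ih =>
    cases b
    · obtain ⟨e, w', rfl⟩ := ih (by simpa using h)
      exact ⟨e + 1, w', rfl⟩
    · exact ⟨0, w, rfl⟩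

lemma exists_eq_append_true_cons_replicate {w : List Bool} (h : true ∈ w) :
    ∃ w' e, w = w' ++ true :: replicate e false := by
  obtain ⟨e, w', hw⟩ := exists_eq_replicate_append_true_cons (mem_reverse.mpr h)
  exact ⟨w'.reverse, e, by simpa using congrArg reverse hw⟩

lemma eq_replicate_false_of_true_not_mem {w : List Bool} (h : true ∉ w) :
    w = replicate w.length false :=
  eq_replicate_iff.mpr ⟨rfl, fun b hb => by cases b <;> simp_all⟩

def stdMorphism (a : ℕ) : List Bool → List Bool :=
  flatMap fun b => bif b then [false] else replicate a false ++ [true]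

section stdMorphism

variable {a : ℕ}

@[simp] lemma stdMorphism_nil : stdMorphism a [] = [] := rfl

@[simp] lemma stdMorphism_cons_true (S : List Bool) :
    stdMorphism a (true :: S) = false :: stdMorphism a S := rfl

@[simp] lemma stdMorphism_cons_false (S : List Bool) :
    stdMorphism a (false :: S) = replicate a false ++ true :: stdMorphism a S := by
  simp [stdMorphism]

@[simp] lemma stdMorphism_append (S T : List Bool) :
    stdMorphism a (S ++ T) = stdMorphism a S ++ stdMorphism a T :=
  flatMap_append

@[simp] lemma stdMorphism_replicate_true (i : ℕ) :
    stdMorphism a (replicate i true) = replicate i false := by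
  induction i <;> simp_all [replicate_succ]

lemma stdMorphism_flatten_replicate (t : ℕ) (S : List Bool) :
    stdMorphism a (replicate t S).flatten = (replicate t (stdMorphism a S)).flatten := by
  induction t <;> simp_all [replicate_succ]

lemma stdMorphism_append_true_false (C : List Bool) :
    stdMorphism a (C ++ [true, false]) = stdMorphism a C ++ replicate a false ++ [false, true] := by
  have : false :: replicate a false = replicate a false ++ [false] := by
    rw [← replicate_succ, replicate_succ']
  simp [← cons_append, this]

lemma List.IsInfix.stdMorphism {S T : List Bool} (h : S <:+: T) :
    stdMorphism a S <:+: stdMorphism a T :=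
  h.flatMap _

lemma List.Perm.stdMorphism {S T : List Bool} (h : S.Perm T) :
    (stdMorphism a S).Perm (stdMorphism a T) :=
  h.flatMap_right _

lemma perm_stdMorphism_append {C W : List Bool} (h : (C ++ [false, true]).Perm W) :
    (stdMorphism a C ++ replicate a false ++ [false, true]).Perm (stdMorphism a W) := by
  rw [← stdMorphism_append_true_false]
  exact (((perm_append_left_iff C).mpr (Perm.swap false true [])).trans h).stdMorphism

lemma length_le_length_stdMorphism (C : List Bool) :
    C.length ≤ (stdMorphism a C).length := by
  induction C with
  | nil => simp
  | cons b C ih =>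
    cases b <;> simp only [stdMorphism_cons_false, stdMorphism_cons_true, length_append,
      length_cons, length_replicate] <;> omega

lemma length_lt_length_stdMorphism_append (ha : 0 < a) (C : List Bool) :
    C.length < (stdMorphism a C ++ replicate a false).length := by
  have := length_le_length_stdMorphism (a := a) C
  simp only [length_append, length_replicate]
  omega

lemma getLast?_stdMorphism (S : List Bool) :
    (stdMorphism a S).getLast? = S.getLast?.map not := by
  induction S using reverseRecOn with
  | nil => rfl
  | append_singleton S b _ => cases b <;> simp

lemma exists_eq_append_false_of_getLast?_stdMorphism {S : List Bool}
    (h : (stdMorphism a S).getLast? = some true) : ∃ S', S = S' ++ [false] := by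
  rw [getLast?_stdMorphism] at h
  obtain ⟨b, hb, hb'⟩ := Option.map_eq_some_iff.mp h
  obtain rfl : b = false := by simpa using hb'
  exact getLast?_eq_some_iff.mp hb

lemma exists_eq_of_stdMorphism_eq_replicate_append {S q : List Bool} {g : ℕ}
    (h : stdMorphism a S = replicate g false ++ true :: q) :
    ∃ j S', S = replicate j true ++ false :: S' ∧ g = j + a ∧ stdMorphism a S' = q := by
  induction S generalizing g with
  | nil => simp at h
  | cons b S ih =>
    cases b with
    | true =>
      obtain _ | g := g
      · simp at h
      obtain ⟨j, S', rfl, rfl, hS'⟩ := ih (by simpa [replicate_succ] using h)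
      exact ⟨j + 1, S', by simp [replicate_succ], by omega, hS'⟩
    | false =>
      obtain ⟨rfl, rfl⟩ := replicate_append_true_inj (by simpa using h)
      exact ⟨0, S, rfl, by omega, rfl⟩

lemma stdMorphism_injective (ha : 0 < a) : Function.Injective (stdMorphism a) := by
  have key (S T : List Bool) : stdMorphism a (true :: S) ≠ stdMorphism a (false :: T) := by
    intro h
    obtain ⟨a', rfl⟩ := Nat.exists_eq_add_one_of_ne_zero ha.ne'
    have : stdMorphism (a' + 1) S = replicate a' false ++ true :: stdMorphism (a' + 1) T := by
      simpa [replicate_succ] using h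
    obtain ⟨j, _, _, hj, _⟩ := exists_eq_of_stdMorphism_eq_replicate_append this
    omega
  intro S T h
  induction S generalizing T with
  | nil =>
    cases T with
    | nil => rfl
    | cons b T => cases b <;> simp at h
  | cons b S ih =>
    cases T with
    | nil => cases b <;> simp at h
    | cons b' T =>
      cases b <;> cases b'
      · rw [ih (by simpa using h)]
      · exact absurd h.symm (key _ _)
      · exact absurd h (key _ _)
      · rw [ih (by simpa using h)]

lemma exists_eq_append_of_stdMorphism_eq_append {S A B : List Bool}
    (h : stdMorphism a S = A ++ B) (hA : A.getLast? ≠ some false) :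
    ∃ S₁ S₂, S = S₁ ++ S₂ ∧ stdMorphism a S₁ = A ∧ stdMorphism a S₂ = B := by
  induction S generalizing A with
  | nil =>
    obtain ⟨rfl, rfl⟩ := append_eq_nil_iff.mp h.symm
    exact ⟨[], [], rfl, rfl, rfl⟩
  | cons b S ih =>
    rcases eq_or_ne A [] with rfl | hA0
    · exact ⟨[], b :: S, rfl, rfl, h⟩
    have hcons : stdMorphism a (b :: S) = stdMorphism a [b] ++ stdMorphism a S := by
      rw [← stdMorphism_append, singleton_append]
    -- a proper prefix of a block is a run of `0`s, which `A` is not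
    have hblock : stdMorphism a [b] <+: A := by
      rcases prefix_or_prefix_of_prefix (h ▸ hcons ▸ prefix_append _ _) (prefix_append A B)
        with h1 | h1
      · exact h1
      cases b
      · rcases prefix_concat_iff.mp (by simpa using h1) with rfl | h2
        · simp
        · exact absurd (getLast?_eq_some_of_prefix_replicate h2 hA0) hA
      · exact absurd (getLast?_eq_some_of_prefix_replicate (n := 1) h1 hA0) hA
    obtain ⟨A', rfl⟩ := hblock
    have hA' : A'.getLast? ≠ some false := by
      cases hx : A'.getLast? <;> simp_all [getLast?_append]
    obtain ⟨S₁, S₂, rfl, h₁, h₂⟩ :=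
      ih (by rw [← append_cancel_left_eq (stdMorphism a [b]), ← hcons, h, append_assoc]) hA'
    exact ⟨b :: S₁, S₂, rfl, by rw [← singleton_append, stdMorphism_append, h₁], h₂⟩

lemma replicate_prefix_stdMorphism_append (C : List Bool) :
    replicate a false <+: stdMorphism a C ++ replicate a false := by
  induction C with
  | nil => simp
  | cons b C ih =>
    cases b
    · simp [append_assoc]
    · calc replicate a false <+: replicate (a + 1) false :=
            prefix_replicate_iff.mpr ⟨by simp, by simp⟩
        _ <+: stdMorphism a (true :: C) ++ replicate a false := by simpa [replicate_succ] using ih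

lemma List.IsPrefix.stdMorphism_append_replicate {C C' : List Bool} (h : C <+: C') :
    stdMorphism a C ++ replicate a false <+: stdMorphism a C' ++ replicate a false := by
  obtain ⟨δ, rfl⟩ := h
  simpa [append_assoc] using (prefix_append_right_inj (stdMorphism a C)).mpr
    (replicate_prefix_stdMorphism_append δ)

end stdMorphism

def shift (d : ℕ → ℕ) : ℕ → ℕ := fun i => d (i + 1)

def IsDirective (d : ℕ → ℕ) : Prop := ∀ i, 1 ≤ i → 0 < d i

lemma IsDirective.shift {d : ℕ → ℕ} (hd : IsDirective d) : IsDirective (shift d) :=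
  fun i _ => hd (i + 1) (by omega)

lemma stdWord_succ (d : ℕ → ℕ) : ∀ m, stdWord d (m + 1) = stdMorphism (d 1) (stdWord (shift d) m)
  | 0 => rfl
  | 1 => by simp [stdWord]
  | m + 2 => by
    have h : stdWord (shift d) (m + 2) = (replicate (shift d (m + 1))
        (stdWord (shift d) (m + 1))).flatten ++ stdWord (shift d) m := rfl
    rw [h, stdMorphism_append, stdMorphism_flatten_replicate, ← stdWord_succ d m,
      ← stdWord_succ d (m + 1)]
    rfl

lemma stdMorphism_flatten_replicate_append_stdWord (d : ℕ → ℕ) (t m : ℕ) :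
    stdMorphism (d 1) ((replicate t (stdWord (shift d) (m + 1))).flatten ++ stdWord (shift d) m) =
      (replicate t (stdWord d (m + 2))).flatten ++ stdWord d (m + 1) := by
  rw [stdMorphism_append, stdMorphism_flatten_replicate, ← stdWord_succ, ← stdWord_succ]

lemma length_stdWord (d : ℕ → ℕ) : ∀ m, (stdWord d m).length = stdLen d m
  | 0 => rfl
  | 1 => rfl
  | m + 2 => by simp [stdWord, stdLen, length_stdWord d m, length_stdWord d (m + 1)]

lemma stdLen_pos (d : ℕ → ℕ) : ∀ m, 0 < stdLen d m
  | 0 => Nat.one_pos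
  | 1 => Nat.one_pos
  | m + 2 => Nat.add_pos_right _ (stdLen_pos d m)

lemma stdLen_lt_stdLen_succ {d : ℕ → ℕ} {m : ℕ} (hm : 1 ≤ m) (hdm : 0 < d m) :
    stdLen d m < stdLen d (m + 1) := by
  obtain ⟨m, rfl⟩ := Nat.exists_eq_add_of_le' hm
  have := stdLen_pos d m
  have := Nat.le_mul_of_pos_left (stdLen d (m + 1)) hdm
  simp only [stdLen]
  omega

lemma exists_stdWord_eq_append_cons {d : ℕ → ℕ} {m : ℕ} (hdm : 0 < d (m + 1)) :
    ∃ b t, stdWord d (m + 2) = stdWord d (m + 1) ++ b :: t := by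
  obtain ⟨k, hk⟩ := Nat.exists_eq_add_of_lt hdm
  have hne : (replicate k (stdWord d (m + 1))).flatten ++ stdWord d m ≠ [] :=
    append_ne_nil_of_right_ne_nil _
      (ne_nil_of_length_pos ((length_stdWord d m).symm ▸ stdLen_pos d m))
  obtain ⟨b, t, ht⟩ := exists_cons_of_ne_nil hne
  exact ⟨b, t, by rw [stdWord, hk, zero_add, replicate_succ, flatten_cons, append_assoc, ht]⟩

lemma exists_stdWord_eq_append_cons_stdWord {d : ℕ → ℕ} {m : ℕ} (hdm : 0 < d (m + 2)) :
    ∃ t b, stdWord d (m + 3) = t ++ b :: stdWord d (m + 1) := by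
  obtain ⟨k, hk⟩ := Nat.exists_eq_add_of_lt hdm
  have hne : (replicate (d (m + 2)) (stdWord d (m + 2))).flatten ≠ [] := by
    rw [hk, zero_add, replicate_succ, flatten_cons]
    exact append_ne_nil_of_left_ne_nil
      (ne_nil_of_length_pos ((length_stdWord d _).symm ▸ stdLen_pos d _)) _
  obtain ⟨t, b, ht⟩ := (eq_nil_or_concat' _).resolve_left hne
  exact ⟨t, b, by rw [stdWord, ht, append_assoc, singleton_append]⟩

lemma mem_Fac_of_infix {d : ℕ → ℕ} {w w' : List Bool} (hw : w ∈ Fac d) (h : w' <:+: w) :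
    w' ∈ Fac d :=
  let ⟨m, hm⟩ := hw
  ⟨m, h.trans hm⟩

lemma stdWord_mem_Fac (d : ℕ → ℕ) : ∀ m, stdWord d m ∈ Fac d
  | 0 => ⟨1, (suffix_append _ _).isInfix⟩
  | m + 1 => ⟨m, infix_refl _⟩

lemma stdMorphism_mem_Fac {d : ℕ → ℕ} {S : List Bool} (hS : S ∈ Fac (shift d)) :
    stdMorphism (d 1) S ∈ Fac d :=
  let ⟨m, hm⟩ := hS
  ⟨m + 1, stdWord_succ d (m + 1) ▸ hm.stdMorphism⟩

lemma exists_mem_Fac_shift {d : ℕ → ℕ} {w : List Bool} (hw : w ∈ Fac d) :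
    ∃ S ∈ Fac (shift d), w <:+: stdMorphism (d 1) S :=
  let ⟨m, hm⟩ := hw
  ⟨_, stdWord_mem_Fac _ m, stdWord_succ d m ▸ hm⟩

lemma exists_append_singleton_mem_Fac {d : ℕ → ℕ} (hd : IsDirective d) {w : List Bool}
    (hw : w ∈ Fac d) : ∃ b, w ++ [b] ∈ Fac d := by
  obtain ⟨m, s, e, hse⟩ := hw
  cases e with
  | cons b e => exact ⟨b, m, s, e, by simp [← hse]⟩
  | nil =>
    obtain ⟨b, t, ht⟩ := exists_stdWord_eq_append_cons (hd (m + 1) (by omega))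
    exact ⟨b, m + 1, s, t, by simp [ht, ← hse]⟩

lemma exists_cons_mem_Fac {d : ℕ → ℕ} (hd : IsDirective d) {w : List Bool} (hw : w ∈ Fac d) :
    ∃ b, b :: w ∈ Fac d := by
  obtain ⟨m, s, e, hse⟩ := hw
  rcases eq_nil_or_concat' s with rfl | ⟨s, b, rfl⟩
  · obtain ⟨t, b, ht⟩ := exists_stdWord_eq_append_cons_stdWord (hd (m + 2) (by omega))
    exact ⟨b, m + 2, t, e, by simp [ht, ← hse]⟩
  · exact ⟨b, m, s, e, by simp [← hse]⟩

section Fac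

variable {d : ℕ → ℕ}

lemma exists_replicate_true_mem_Fac_shift {g : ℕ}
    (hw : true :: (replicate g false ++ [true]) ∈ Fac d) :
    ∃ j, g = j + d 1 ∧ replicate j true ∈ Fac (shift d) := by
  obtain ⟨S, hS, s, e, hse⟩ := exists_mem_Fac_shift hw
  have hsplit : stdMorphism (d 1) S = (s ++ [true]) ++ (replicate g false ++ true :: e) := by
    simp [← hse]
  obtain ⟨S₁, S₂, rfl, -, h₂⟩ := exists_eq_append_of_stdMorphism_eq_append hsplit (by simp)
  obtain ⟨j, S', rfl, hg, -⟩ := exists_eq_of_stdMorphism_eq_replicate_append h₂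
  exact ⟨j, hg, mem_Fac_of_infix hS ⟨S₁, false :: S', by simp⟩⟩

lemma le_of_gap_mem_Fac {g : ℕ} (hw : true :: (replicate g false ++ [true]) ∈ Fac d) :
    d 1 ≤ g := by
  obtain ⟨j, rfl, -⟩ := exists_replicate_true_mem_Fac_shift hw
  omega

lemma true_true_not_mem_Fac (hd1 : 0 < d 1) : [true, true] ∉ Fac d :=
  fun h => (le_of_gap_mem_Fac (g := 0) h).not_gt hd1

lemma gap_le_of_mem_Fac (hd2 : 0 < d 2) {g : ℕ}
    (hw : true :: (replicate g false ++ [true]) ∈ Fac d) : g ≤ d 1 + 1 := by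
  obtain ⟨j, rfl, hj⟩ := exists_replicate_true_mem_Fac_shift hw
  by_contra! hlt
  refine true_true_not_mem_Fac (d := shift d) hd2 (mem_Fac_of_infix hj ?_)
  obtain ⟨k, rfl⟩ : ∃ k, j = k + 2 := ⟨j - 2, by omega⟩
  exact ⟨[], replicate k true, by simp [replicate_succ]⟩

lemma replicate_prefix_of_true_cons_mem_Fac {w : List Bool} (hw : true :: w ∈ Fac d)
    (htrue : true ∈ w) : replicate (d 1) false <+: w := by
  obtain ⟨e, w', rfl⟩ := exists_eq_replicate_append_true_cons htrue
  have := le_of_gap_mem_Fac (g := e) (mem_Fac_of_infix hw ⟨[], w', by simp⟩)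
  exact ((prefix_replicate_iff (n := e)).mpr ⟨by simpa, by simp⟩).trans (prefix_append _ _)

lemma exists_append_replicate_append_true_mem_Fac (hd : IsDirective d) {w : List Bool}
    (hw : w ∈ Fac d) : ∃ i, w ++ replicate i false ++ [true] ∈ Fac d := by
  obtain ⟨S, hS, s, e, hse⟩ := exists_mem_Fac_shift hw
  by_cases he : true ∈ e
  · obtain ⟨i, e', rfl⟩ := exists_eq_replicate_append_true_cons he
    exact ⟨i, mem_Fac_of_infix (stdMorphism_mem_Fac hS) ⟨s, e', by simp [← hse]⟩⟩
  -- otherwise only `0`s follow `w` in the image of `S`, and the next `1` comes from extending `S`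
  -- to the right up to a `0`
  have hext : ∃ i, S ++ replicate i true ++ [false] ∈ Fac (shift d) := by
    obtain ⟨b, hb⟩ := exists_append_singleton_mem_Fac hd.shift hS
    cases b
    · exact ⟨0, by simpa using hb⟩
    obtain ⟨b', hb'⟩ := exists_append_singleton_mem_Fac hd.shift hb
    cases b'
    · exact ⟨1, by simpa using hb'⟩
    exact absurd (mem_Fac_of_infix hb' ⟨S, [], by simp⟩) (true_true_not_mem_Fac (hd 2 (by omega)))
  obtain ⟨i, hi⟩ := hext
  refine ⟨e.length + (i + d 1), mem_Fac_of_infix (stdMorphism_mem_Fac hi) ⟨s, [], ?_⟩⟩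
  rw [eq_replicate_false_of_true_not_mem he] at hse
  simp [← hse, replicate_add, -replicate_append_replicate]

lemma exists_true_cons_replicate_append_mem_Fac (hd : IsDirective d) {w : List Bool}
    (hw : w ∈ Fac d) : ∃ j, true :: (replicate j false ++ w) ∈ Fac d := by
  obtain ⟨S, hS, s, e, hse⟩ := exists_mem_Fac_shift hw
  by_cases hs : true ∈ s
  · obtain ⟨s', j, rfl⟩ := exists_eq_append_true_cons_replicate hs
    exact ⟨j, mem_Fac_of_infix (stdMorphism_mem_Fac hS) ⟨s', e, by simp [← hse]⟩⟩
  have hext : ∃ i, false :: (replicate i true ++ S) ∈ Fac (shift d) := by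
    obtain ⟨b, hb⟩ := exists_cons_mem_Fac hd.shift hS
    cases b
    · exact ⟨0, by simpa using hb⟩
    obtain ⟨b', hb'⟩ := exists_cons_mem_Fac hd.shift hb
    cases b'
    · exact ⟨1, by simpa using hb'⟩
    exact absurd (mem_Fac_of_infix hb' ⟨[], S, by simp⟩) (true_true_not_mem_Fac (hd 2 (by omega)))
  obtain ⟨i, hi⟩ := hext
  refine ⟨i + s.length, mem_Fac_of_infix (stdMorphism_mem_Fac hi) ⟨replicate (d 1) false, e, ?_⟩⟩
  rw [eq_replicate_false_of_true_not_mem hs] at hse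
  simp [← hse, replicate_add, -replicate_append_replicate]

lemma true_cons_mem_Fac (hd : IsDirective d) {w : List Bool} {g : ℕ}
    (hw : replicate g false ++ w ∈ Fac d) (htrue : true ∈ w) (hg : d 1 + 1 ≤ g) :
    true :: (replicate g false ++ w) ∈ Fac d := by
  obtain ⟨j, hj⟩ := exists_true_cons_replicate_append_mem_Fac hd hw
  obtain ⟨e, w', rfl⟩ := exists_eq_replicate_append_true_cons htrue
  have := gap_le_of_mem_Fac (hd 2 (by omega)) (g := j + g + e)
    (mem_Fac_of_infix hj ⟨[], w', by simp [replicate_add, -replicate_append_replicate]⟩)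
  obtain rfl : j = 0 := by omega
  simpa using hj

lemma append_true_mem_Fac (hd : IsDirective d) {w : List Bool} {g : ℕ}
    (hw : w ++ replicate g false ∈ Fac d) (htrue : true ∈ w) (hg : d 1 + 1 ≤ g) :
    w ++ replicate g false ++ [true] ∈ Fac d := by
  obtain ⟨i, hi⟩ := exists_append_replicate_append_true_mem_Fac hd hw
  obtain ⟨w', e, rfl⟩ := exists_eq_append_true_cons_replicate htrue
  have := gap_le_of_mem_Fac (hd 2 (by omega)) (g := e + g + i)
    (mem_Fac_of_infix hi ⟨w', [], by simp [replicate_add, -replicate_append_replicate]⟩)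
  obtain rfl : i = 0 := by omega
  simpa using hi

lemma append_true_false_mem_Fac (hd : IsDirective d) {w : List Bool}
    (hw : w ++ [true] ∈ Fac d) : w ++ [true, false] ∈ Fac d := by
  obtain ⟨i, hi⟩ := exists_append_replicate_append_true_mem_Fac hd hw
  have := le_of_gap_mem_Fac (g := i) (mem_Fac_of_infix hi ⟨w, [], by simp⟩)
  obtain ⟨i, rfl⟩ := Nat.exists_eq_add_of_lt (lt_of_lt_of_le (hd 1 le_rfl) this)
  exact mem_Fac_of_infix hi ⟨[], replicate i false ++ [true], by simp [replicate_succ]⟩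

lemma exists_stdMorphism_eq_of_true_cons_mem_Fac {A : List Bool} (hw : true :: A ∈ Fac d)
    (hA : A.getLast? = some true) :
    ∃ Z, stdMorphism (d 1) Z = A ∧ false :: Z ∈ Fac (shift d) := by
  obtain ⟨S, hS, s, e, hse⟩ := exists_mem_Fac_shift hw
  have hsplit : stdMorphism (d 1) S = (s ++ [true]) ++ (A ++ e) := by simp [← hse]
  obtain ⟨S₁, S₂, rfl, h₁, h₂⟩ := exists_eq_append_of_stdMorphism_eq_append hsplit (by simp)
  obtain ⟨Z, S₃, rfl, hZ, -⟩ := exists_eq_append_of_stdMorphism_eq_append h₂ (by simp [hA])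
  obtain ⟨S₁, rfl⟩ := exists_eq_append_false_of_getLast?_stdMorphism
    (a := d 1) (S := S₁) (by simp [h₁])
  exact ⟨Z, hZ, mem_Fac_of_infix hS ⟨S₁, S₃, by simp⟩⟩

lemma exists_stdMorphism_eq_pair_of_true_cons_mem_Fac {A₁ A₂ : List Bool}
    (hw : true :: (A₁ ++ A₂) ∈ Fac d) (hA₁ : A₁.getLast? = some true)
    (hA₂ : A₂.getLast? = some true) :
    ∃ Z₁ Z₂, stdMorphism (d 1) Z₁ = A₁ ∧ stdMorphism (d 1) Z₂ = A₂ ∧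
      false :: (Z₁ ++ Z₂) ∈ Fac (shift d) := by
  obtain ⟨Z, hZ, hZmem⟩ := exists_stdMorphism_eq_of_true_cons_mem_Fac hw (by simp [hA₂])
  obtain ⟨Z₁, Z₂, rfl, h₁, h₂⟩ := exists_eq_append_of_stdMorphism_eq_append hZ (by simp [hA₁])
  exact ⟨Z₁, Z₂, h₁, h₂, hZmem⟩

lemma eq_replicate_or_exists_of_stdMorphism_eq (hd1 : 0 < d 1) {Z c : List Bool}
    (hZ : stdMorphism (d 1) Z = false :: (c ++ [true])) (hc : true :: c ∈ Fac d) :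
    false :: c = replicate (d 1) false ∨
      ∃ C, Z = true :: (C ++ [false]) ∧ c = stdMorphism (d 1) C ++ replicate (d 1) false := by
  obtain ⟨Z, rfl⟩ := exists_eq_append_false_of_getLast?_stdMorphism
    (a := d 1) (S := Z) (by rw [hZ, ← cons_append, getLast?_concat])
  have hZ' : stdMorphism (d 1) Z ++ replicate (d 1) false = false :: c :=
    append_cancel_right (bs := [true]) (by simpa using hZ)
  rcases Z with _ | ⟨_ | _, C⟩
  · exact Or.inl (by simpa using hZ'.symm)
  · exfalso
    obtain ⟨a, ha⟩ := Nat.exists_eq_add_of_lt hd1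
    rw [zero_add] at ha
    rw [ha] at hZ'
    have hc' : c =
        replicate a false ++ true :: (stdMorphism (a + 1) C ++ replicate (a + 1) false) := by
      simpa [replicate_succ] using hZ'.symm
    have := le_of_gap_mem_Fac (g := a) (mem_Fac_of_infix hc
      ⟨[], stdMorphism (a + 1) C ++ replicate (a + 1) false, by rw [hc']; simp⟩)
    omega
  · right; exact ⟨C, rfl, by simpa using hZ'.symm⟩

end Fac

def TwinFactors (d : ℕ → ℕ) (c c' : List Bool) : Prop :=
  [false, true] ++ c ++ [false, true] ++ c' ++ [false] ∈ Fac d ∧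
    [false] ++ c ++ [true, false] ++ c' ++ [true, false] ∈ Fac d

section TwinFactors

variable {d : ℕ → ℕ} {c c' : List Bool}

lemma false_cons_mem_Fac_shift (hd : IsDirective d) {C' D : List Bool}
    (hD : c ++ [false, true] = stdMorphism (d 1) D)
    (hX : [false, true] ++ c ++ [false, true] ++ (stdMorphism (d 1) C' ++ replicate (d 1) false)
      ++ [false] ∈ Fac d) :
    false :: (D ++ (C' ++ [true, false])) ∈ Fac (shift d) := by
  have hX₁ := append_true_mem_Fac hd (g := d 1 + 1)
    (w := [false, true] ++ c ++ [false, true] ++ stdMorphism (d 1) C')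
    (by simpa [replicate_succ'] using hX) (by simp) le_rfl
  obtain ⟨Z, hZ, hZmem⟩ := exists_stdMorphism_eq_of_true_cons_mem_Fac
    (A := c ++ [false, true] ++ (stdMorphism (d 1) C' ++ replicate (d 1) false ++ [false, true]))
    (mem_Fac_of_infix hX₁ ⟨[false], [], by simp [replicate_succ']⟩) (by simp [getLast?_cons])
  have hZD : stdMorphism (d 1) Z = stdMorphism (d 1) (D ++ (C' ++ [true, false])) := by
    rw [hZ, stdMorphism_append, ← hD, stdMorphism_append_true_false]
  rwa [stdMorphism_injective (hd 1 le_rfl) hZD] at hZmem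

lemma TwinFactors.eq_of_false_cons_eq (hd : IsDirective d) (h : TwinFactors d c c')
    (hc : false :: c = replicate (d 1) false) :
    false :: c' = replicate (d 1) false ∨
      ∃ q, c' = stdMorphism (d 1) (replicate q false) ++ replicate (d 1) false := by
  obtain ⟨hX, hY⟩ := h
  obtain ⟨j, hj⟩ := exists_true_cons_replicate_append_mem_Fac hd hY
  obtain ⟨Z₁, Z₂, -, hZ₂, hZ⟩ := exists_stdMorphism_eq_pair_of_true_cons_mem_Fac
    (A₁ := replicate (j + d 1) false ++ [true]) (A₂ := [false] ++ c' ++ [true])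
    (mem_Fac_of_infix hj ⟨[], [false], by rw [replicate_add, ← hc]; simp⟩) (by simp)
    (by simp [getLast?_cons])
  rcases eq_replicate_or_exists_of_stdMorphism_eq (hd 1 le_rfl) (by simpa using hZ₂)
    (mem_Fac_of_infix hX ⟨[false, true] ++ c ++ [false], [false], by simp⟩) with h | ⟨C', rfl, rfl⟩
  · exact Or.inl h
  suffices true ∉ C' from Or.inr ⟨C'.length, by rw [← eq_replicate_false_of_true_not_mem this]⟩
  intro htrue
  obtain ⟨e, ρ, rfl⟩ := exists_eq_replicate_append_true_cons htrue
  -- in the preimage, the run `0^e` is both a full gap between two `1`s and part of a run `0^(e+2)`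
  have hlow := le_of_gap_mem_Fac (d := shift d) (g := e)
    (mem_Fac_of_infix hZ ⟨false :: Z₁, ρ ++ [false], by simp⟩)
  have hX' := false_cons_mem_Fac_shift hd (D := [false]) (C' := replicate e false ++ true :: ρ)
    (by rw [stdMorphism_cons_false, stdMorphism_nil,
          ← cons_eq_replicate_iff_append_singleton_eq.mp hc]
        simp) hX
  have hrun := true_cons_mem_Fac hd.shift (g := e + 2) (w := true :: ρ ++ [true, false])
    (by simpa [replicate_succ] using hX') (by simp) (by simp only [shift] at hlow ⊢; omega)
  have := gap_le_of_mem_Fac (d := shift d) (hd 3 (by omega)) (g := e + 2)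
    (mem_Fac_of_infix hrun ⟨[], ρ ++ [true, false], by simp⟩)
  simp only [shift] at hlow this
  omega

lemma TwinFactors.exists_shift (hd : IsDirective d) (h : TwinFactors d c c')
    (hc : false :: c ≠ replicate (d 1) false) :
    ∃ C, c = stdMorphism (d 1) C ++ replicate (d 1) false ∧
      (false :: c' = replicate (d 1) false ∨
        ∃ C', c' = stdMorphism (d 1) C' ++ replicate (d 1) false ∧ TwinFactors (shift d) C C') := by
  obtain ⟨hX, hY⟩ := h
  have hc₁ : true :: c ∈ Fac d :=
    mem_Fac_of_infix hX ⟨[false], [false, true] ++ c' ++ [false], by simp⟩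
  have hc'₁ : true :: c' ∈ Fac d :=
    mem_Fac_of_infix hX ⟨[false, true] ++ c ++ [false], [false], by simp⟩
  have hpre : replicate (d 1) false <+: c := by
    have h₁ := replicate_prefix_of_true_cons_mem_Fac (w := c ++ [false] ++ [true])
      (mem_Fac_of_infix hX ⟨[false], c' ++ [false], by simp⟩) (by simp)
    rcases prefix_concat_iff.mp h₁ with h₂ | h₂
    · simpa using congrArg (true ∈ ·) h₂
    rcases prefix_concat_iff.mp h₂ with h₃ | h₃
    · exact absurd (cons_eq_replicate_iff_append_singleton_eq.mpr h₃.symm) hc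
    · exact h₃
  obtain ⟨c₂, hc₂⟩ := hpre
  -- the run `0^(d 1 + 1)` opening `[false] ++ c` forces a `1` on its left
  have hY₁ := true_cons_mem_Fac hd (g := d 1 + 1) (w := c₂ ++ [true, false] ++ c' ++ [true, false])
    (by rw [← hc₂] at hY; simpa [replicate_succ] using hY) (by simp) le_rfl
  obtain ⟨Z₁, Z₂, hZ₁, hZ₂, hZ⟩ := exists_stdMorphism_eq_pair_of_true_cons_mem_Fac
    (A₁ := [false] ++ c ++ [true]) (A₂ := [false] ++ c' ++ [true])
    (mem_Fac_of_infix hY₁ ⟨[], [false], by rw [← hc₂]; simp [replicate_succ]⟩)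
    (by simp [getLast?_cons]) (by simp [getLast?_cons])
  obtain h | ⟨C, rfl, rfl⟩ :=
    eq_replicate_or_exists_of_stdMorphism_eq (hd 1 le_rfl) (by simpa using hZ₁) hc₁
  · exact absurd h hc
  refine ⟨C, rfl, ?_⟩
  obtain h | ⟨C', rfl, rfl⟩ :=
    eq_replicate_or_exists_of_stdMorphism_eq (hd 1 le_rfl) (by simpa using hZ₂) hc'₁
  · exact Or.inl h
  refine Or.inr ⟨C', rfl, by simpa using hZ, ?_⟩
  simpa using false_cons_mem_Fac_shift hd (D := C ++ [true, false])
    (stdMorphism_append_true_false C).symm hX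

theorem TwinFactors.prefix_or_prefix (hd : IsDirective d) (h : TwinFactors d c c') :
    c <+: c' ∨ c' <+: c := by
  induction hn : c.length using Nat.strong_induction_on generalizing d c c' with
  | _ n ih =>
  by_cases hc : false :: c = replicate (d 1) false
  · rcases h.eq_of_false_cons_eq hd hc with h' | ⟨q, rfl⟩
    · exact Or.inl (cons_injective (hc.trans h'.symm) ▸ prefix_rfl)
    · exact Or.inl ((prefix_replicate_of_cons_eq hc).trans
        (replicate_prefix_stdMorphism_append _))
  obtain ⟨C, rfl, h' | ⟨C', rfl, hCC'⟩⟩ := h.exists_shift hd hc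
  · exact Or.inr ((prefix_replicate_of_cons_eq h').trans
      (replicate_prefix_stdMorphism_append _))
  · rcases ih C.length (hn ▸ length_lt_length_stdMorphism_append (hd 1 le_rfl) C) hd.shift hCC' rfl
      with h'' | h''
    · exact Or.inl h''.stdMorphism_append_replicate
    · exact Or.inr h''.stdMorphism_append_replicate

theorem TwinFactors.exists_perm (hd : IsDirective d)
    (h : TwinFactors d c c') (hlt : c.length < c'.length) :
    ∃ m t, 1 ≤ m ∧ (c ++ [false, true]).Perm (stdWord d (m + 1)) ∧
      (c' ++ [false, true]).Perm ((replicate t (stdWord d (m + 1))).flatten ++ stdWord d m) := by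
  induction hn : c.length using Nat.strong_induction_on generalizing d c c' with
  | _ n ih =>
  by_cases hc : false :: c = replicate (d 1) false
  · obtain h' | ⟨q, rfl⟩ := h.eq_of_false_cons_eq hd hc
    · have := congrArg length (hc.trans h'.symm)
      simp only [length_cons] at this
      omega
    refine ⟨1, q + 1, le_rfl, .of_eq ?_, ?_⟩
    · rw [stdWord_succ]
      simp [stdWord, ← cons_eq_replicate_iff_append_singleton_eq.mp hc]
    · rw [← stdMorphism_flatten_replicate_append_stdWord]
      exact perm_stdMorphism_append (.of_eq (by simp [stdWord, replicate_succ']))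
  obtain ⟨C, rfl, h' | ⟨C', rfl, hCC'⟩⟩ := h.exists_shift hd hc
  · have := congrArg length h'
    simp only [length_cons, length_replicate] at this
    simp only [length_append, length_replicate] at hlt
    omega
  have hCC'_lt : C.length < C'.length := by
    rcases hCC'.prefix_or_prefix hd.shift with h'' | h''
    · refine lt_of_le_of_ne h''.length_le fun heq => ?_
      rw [h''.eq_of_length heq] at hlt
      exact lt_irrefl _ hlt
    · exact absurd h''.stdMorphism_append_replicate.length_le (not_le.mpr hlt)
  obtain ⟨m, t, hm, h₁, h₂⟩ :=
    ih C.length (hn ▸ length_lt_length_stdMorphism_append (hd 1 le_rfl) C) hd.shift hCC' hCC'_lt rfl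
  refine ⟨m + 1, t, by omega, ?_, ?_⟩
  · simpa [← stdWord_succ] using perm_stdMorphism_append (a := d 1) h₁
  · rw [← stdMorphism_flatten_replicate_append_stdWord]
    simpa using perm_stdMorphism_append (a := d 1) h₂

end TwinFactors

section Generates

variable {u v r : List Bool} {x y : Bool}

lemma toNat_eq_toNat_add_sub_iff {a b x y : Bool} :
    ((y.toNat : ℤ) = x.toNat + a.toNat - b.toNat) ↔ (x = y ∧ a = b) ∨ (x ≠ y ∧ a = y ∧ b = x) := by
  cases a <;> cases b <;> cases x <;> cases y <;> simp

lemma generates_cons_cons_iff {a b : Bool} :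
    Generates (a :: u) (b :: v) (x :: y :: r) ↔
      ((y.toNat : ℤ) = x.toNat + a.toNat - b.toNat) ∧ Generates u v (y :: r) := by
  constructor
  · intro h
    exact ⟨h 0 (by simp), fun k hk => by simpa using h (k + 1) (by simpa using hk)⟩
  · rintro ⟨h₀, h⟩ (_ | k) hk
    · simpa using h₀
    · simpa using h k (by simpa using hk)

lemma Generates.drop (h : Generates u v r) (p : ℕ) :
    Generates (u.drop p) (v.drop p) (r.drop p) := by
  intro k hk
  have := h (p + k) (by simp only [length_drop] at hk; omega)
  simpa [getD_eq_getElem?_getD, add_assoc] using this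

lemma Generates.exists_cons_cons (h : Generates u v (x :: y :: r))
    (hu : u.length + 1 = (x :: y :: r).length) (hv : v.length + 1 = (x :: y :: r).length) :
    ∃ a b u' v', u = a :: u' ∧ v = b :: v' ∧ ((y.toNat : ℤ) = x.toNat + a.toNat - b.toNat) ∧
      Generates u' v' (y :: r) ∧ u'.length + 1 = (y :: r).length ∧
        v'.length + 1 = (y :: r).length := by
  obtain ⟨a, u', rfl⟩ := exists_cons_of_ne_nil (l := u) (by rintro rfl; simp at hu)
  obtain ⟨b, v', rfl⟩ := exists_cons_of_ne_nil (l := v) (by rintro rfl; simp at hv)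
  obtain ⟨hstep, htail⟩ := generates_cons_cons_iff.mp h
  exact ⟨a, b, u', v', rfl, rfl, hstep, htail, by simpa using hu, by simpa using hv⟩

lemma Generates.exists_cons_of_ne (h : Generates u v (x :: y :: r)) (hxy : x ≠ y)
    (hu : u.length + 1 = (x :: y :: r).length) (hv : v.length + 1 = (x :: y :: r).length) :
    ∃ u' v', u = y :: u' ∧ v = x :: v' ∧ Generates u' v' (y :: r) ∧
      u'.length + 1 = (y :: r).length ∧ v'.length + 1 = (y :: r).length := by
  obtain ⟨a, b, u', v', rfl, rfl, hstep, htail⟩ := h.exists_cons_cons hu hv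
  obtain ⟨hxy', -⟩ | ⟨-, rfl, rfl⟩ := toNat_eq_toNat_add_sub_iff.mp hstep
  · exact absurd hxy' hxy
  · exact ⟨u', v', rfl, rfl, htail⟩

lemma Generates.exists_append_of_replicate {n : ℕ} (h : Generates u v (x :: (replicate n x ++ r)))
    (hu : u.length + 1 = (x :: (replicate n x ++ r)).length)
    (hv : v.length + 1 = (x :: (replicate n x ++ r)).length) :
    ∃ c u' v', u = c ++ u' ∧ v = c ++ v' ∧ c.length = n ∧ Generates u' v' (x :: r) ∧
      u'.length + 1 = (x :: r).length ∧ v'.length + 1 = (x :: r).length := by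
  induction n generalizing u v with
  | zero => exact ⟨[], u, v, rfl, rfl, rfl, h, hu, hv⟩
  | succ n ih =>
    rw [replicate_succ, cons_append] at h hu hv
    obtain ⟨a, b, u', v', rfl, rfl, hstep, htail, hu', hv'⟩ := h.exists_cons_cons hu hv
    obtain ⟨-, rfl⟩ | ⟨hxx, -⟩ := toNat_eq_toNat_add_sub_iff.mp hstep
    · obtain ⟨c, u'', v'', rfl, rfl, rfl, hrest⟩ := ih htail hu' hv'
      exact ⟨a :: c, u'', v'', rfl, rfl, rfl, hrest⟩
    · exact absurd rfl hxx

theorem Generates.exists_twin_infix {s e : List Bool} {k₁ k₂ : ℕ} (h : Generates u v r)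
    (hu : u.length + 1 = r.length) (hv : v.length + 1 = r.length)
    (hr : r = s ++ false :: true :: false :: (replicate k₁ false ++ true :: false ::
      (replicate k₂ false ++ true :: e))) :
    ∃ c c', c.length = k₁ ∧ c'.length = k₂ ∧
      [false, true] ++ c ++ [false, true] ++ c' ++ [false] <:+: v ∧
      [true, false] ++ c ++ [true, false] ++ c' ++ [true] <:+: u := by
  subst hr
  have h₀ := h.drop s.length
  rw [drop_left] at h₀
  obtain ⟨U, V, hU, hV, h₁, hU₁, hV₁⟩ := h₀.exists_cons_of_ne (by decide)
    (by simp only [length_drop, length_append, length_cons] at hu ⊢; omega)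
    (by simp only [length_drop, length_append, length_cons] at hv ⊢; omega)
  obtain ⟨U, V, rfl, rfl, h₂, hU₂, hV₂⟩ := h₁.exists_cons_of_ne (by decide) hU₁ hV₁
  obtain ⟨c, U, V, rfl, rfl, hc, h₃, hU₃, hV₃⟩ := h₂.exists_append_of_replicate hU₂ hV₂
  obtain ⟨U, V, rfl, rfl, h₄, hU₄, hV₄⟩ := h₃.exists_cons_of_ne (by decide) hU₃ hV₃
  obtain ⟨U, V, rfl, rfl, h₅, hU₅, hV₅⟩ := h₄.exists_cons_of_ne (by decide) hU₄ hV₄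
  obtain ⟨c', U, V, rfl, rfl, hc', h₆, hU₆, hV₆⟩ := h₅.exists_append_of_replicate hU₅ hV₅
  obtain ⟨U, V, rfl, rfl, -⟩ := h₆.exists_cons_of_ne (by decide) hU₆ hV₆
  exact ⟨c, c', hc, hc', (IsPrefix.isInfix ⟨V, by simp⟩).trans (hV ▸ drop_suffix _ _).isInfix,
    (IsPrefix.isInfix ⟨U, by simp⟩).trans (hU ▸ drop_suffix _ _).isInfix⟩

end Generates

/-- If `u, v ∈ Fac(d)` are words of length `n`, the pair `(u,v)` generates a
word `r` of length `n+1`, and `r` contains a factor `0 1 0^{k₁} 1 0^{k₂} 1`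
with `k₂ > k₁ > 0`, then `k₁ = l_m - 1` for some `m ≥ 1` and
`(k₂ + 1) mod l_m = l_{m-1}`. -/
theorem factor_structure_of_generated (d : ℕ → ℕ) (hd : ∀ i, 1 ≤ i → 0 < d i)
    (n : ℕ) (u v r : List Bool)
    (hu : u ∈ Fac d) (hv : v ∈ Fac d)
    (hul : u.length = n) (hvl : v.length = n) (hr : r.length = n + 1)
    (hgen : Generates u v r) (k₁ k₂ : ℕ) (hk₁ : 0 < k₁) (hk₂ : k₁ < k₂)
    (hfac : (false :: true :: (List.replicate k₁ false ++ [true]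
        ++ List.replicate k₂ false ++ [true])) <:+: r) :
    ∃ m : ℕ, 1 ≤ m ∧ k₁ = stdLen d (m + 1) - 1 ∧
      (k₂ + 1) % stdLen d (m + 1) = stdLen d m := by
  obtain ⟨s, e, hse⟩ := hfac
  obtain ⟨k₁, rfl⟩ : ∃ k, k₁ = k + 1 := ⟨k₁ - 1, by omega⟩
  obtain ⟨k₂, rfl⟩ : ∃ k, k₂ = k + 1 := ⟨k₂ - 1, by omega⟩
  obtain ⟨c, c', rfl, rfl, hXv, hWu⟩ :=
    hgen.exists_twin_infix (s := s) (e := e) (k₁ := k₁) (k₂ := k₂)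
    (by omega) (by omega) (by rw [← hse]; simp [replicate_succ])
  have htwin : TwinFactors d c c' := by
    refine ⟨mem_Fac_of_infix hv hXv, ?_⟩
    simpa using append_true_false_mem_Fac hd (w := [false] ++ c ++ [true, false] ++ c')
      (mem_Fac_of_infix hu ((show _ <:+: _ from ⟨[true], [], by simp⟩).trans hWu))
  obtain ⟨m, t, hm, h₁, h₂⟩ := htwin.exists_perm hd (by omega)
  have hl₁ := h₁.length_eq
  have hl₂ := h₂.length_eq
  simp only [length_append, length_cons, length_nil, length_flatten, map_replicate, sum_replicate,
    smul_eq_mul, length_stdWord] at hl₁ hl₂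
  refine ⟨m, hm, by omega, ?_⟩
  rw [show c'.length + 1 + 1 = stdLen d m + stdLen d (m + 1) * t by rw [mul_comm]; omega,
    Nat.add_mul_mod_self_left, Nat.mod_eq_of_lt (stdLen_lt_stdLen_succ hm (hd m hm))]
end

section
/- Let d = (d_1, d_2, …) be a directive sequence of positive integers and n ≥ 1. If a ∈ {0,1} is the last symbol of the standard word s_n, then the word a·s_n^{d_{n+1}+2} (the letter a followed by d_{n+1}+2 consecutive copies of s_n) is not an element of Fac(d). -/
/-!
Write `σ_n` for the morphism `0 ↦ s_n, 1 ↦ s_{n-1}`, i.e. `subst (stdWord d (n + 1)) (stdWord d n)`,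
and `ψ_q` for `0 ↦ 0^q 1, 1 ↦ 0`, i.e. `stdMorph q`. Then `σ_{n+1} = σ_n ∘ ψ_{d_{n+1}}`, so every
long standard word is `σ_n (ψ_{d_{n+1}} t)` for a word `t` with no two adjacent `1`s.

For `n ≥ 1` the morphism `σ_n` is synchronizing on such words: every occurrence of `s_n` in
`σ_n t` starts at a block boundary. This goes by induction on `n`, the key point being that
`s_n s_{n-1}` and `s_{n-1} s_n` have different last letters. Consequently an occurrence of
`a s_n^{d_{n+1}+2}` in `σ_n (ψ t)` comes from an occurrence of `c 0^{d_{n+1}+1}` in `ψ t` with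
`σ_n c` ending in `a`. If `c = 0`, then `ψ_{d_{n+1}} t` would contain `d_{n+1} + 2` consecutive
zeros, which is impossible. If `c = 1`, then `a` would be the last letter of both `s_n` and
`s_{n-1}`.
-/

namespace Sturmian

section Subst

variable {α : Type*}

def subst (A B : List α) (t : List Bool) : List α :=
  t.flatMap fun c => cond c B A

@[simp] theorem subst_nil (A B : List α) : subst A B [] = [] := rfl

@[simp] theorem subst_cons (A B : List α) (c : Bool) (t : List Bool) :
    subst A B (c :: t) = cond c B A ++ subst A B t := rfl

@[simp] theorem subst_append (A B : List α) (s t : List Bool) :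
    subst A B (s ++ t) = subst A B s ++ subst A B t :=
  List.flatMap_append

theorem subst_replicate_false (A B : List α) (m : ℕ) :
    subst A B (List.replicate m false) = (List.replicate m A).flatten :=
  List.flatMap_replicate

theorem subst_flatten_replicate (A B : List α) (u : List Bool) (m : ℕ) :
    subst A B (List.replicate m u).flatten = (List.replicate m (subst A B u)).flatten := by
  induction m with
  | zero => rfl
  | succ m ih => simp [List.replicate_succ, ih]

theorem subst_subst (X Y : List α) (A B t : List Bool) :
    subst X Y (subst A B t) = subst (subst X Y A) (subst X Y B) t := by
  induction t with
  | nil => rfl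
  | cons c t ih => cases c <;> simp [ih]

theorem subst_false_true (t : List Bool) : subst [false] [true] t = t := by
  induction t with
  | nil => rfl
  | cons c t ih => cases c <;> simp [ih]

theorem eq_nil_of_subst_eq_nil {A B : List α} (hA : A ≠ []) (hB : B ≠ []) {t : List Bool}
    (h : subst A B t = []) : t = [] := by
  cases t with
  | nil => rfl
  | cons c t => cases c <;> simp_all

end Subst

def stdMorph (q : ℕ) : List Bool → List Bool :=
  subst (List.replicate q false ++ [true]) [false]

theorem stdWord_add_two (d : ℕ → ℕ) (n : ℕ) :
    stdWord d (n + 2) = (List.replicate (d (n + 1)) (stdWord d (n + 1))).flatten ++ stdWord d n :=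
  rfl

theorem stdWord_two (d : ℕ → ℕ) : stdWord d 2 = List.replicate (d 1) false ++ [true] := by
  simp [stdWord]

theorem stdWord_ne_nil (d : ℕ → ℕ) : ∀ n, stdWord d n ≠ []
  | 0 | 1 => by simp [stdWord]
  | n + 2 => by simp [stdWord_add_two, stdWord_ne_nil d n]

theorem length_stdWord_lt (d : ℕ → ℕ) (hd : ∀ i, 1 ≤ i → 0 < d i) {n : ℕ} (hn : 1 ≤ n) :
    (stdWord d n).length < (stdWord d (n + 1)).length := by
  obtain ⟨m, rfl⟩ : ∃ m, n = m + 1 := ⟨n - 1, by omega⟩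
  obtain ⟨q, hq⟩ := Nat.exists_eq_add_one.mpr (hd (m + 1) (by omega))
  have := List.length_pos_iff.mpr (stdWord_ne_nil d m)
  simp [stdWord_add_two, hq, List.replicate_succ]
  omega

theorem stdWord_add_one_prefix_of_le (d : ℕ → ℕ) (hd : ∀ i, 1 ≤ i → 0 < d i) {m n : ℕ}
    (h : m ≤ n) : stdWord d (m + 1) <+: stdWord d (n + 1) := by
  induction n, h using Nat.le_induction with
  | base => exact List.prefix_refl _
  | succ n _ ih =>
    obtain ⟨q, hq⟩ := Nat.exists_eq_add_one.mpr (hd (n + 1) (by omega))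
    refine ih.trans ⟨(List.replicate q (stdWord d (n + 1))).flatten ++ stdWord d n, ?_⟩
    simp [stdWord_add_two, hq, List.replicate_succ]

theorem getLast?_stdWord_succ_ne (d : ℕ → ℕ) :
    ∀ n, (stdWord d (n + 1)).getLast? ≠ (stdWord d n).getLast?
  | 0 => by simp [stdWord]
  | n + 1 => by
    rw [stdWord_add_two, List.getLast?_append_of_ne_nil _ (stdWord_ne_nil d n)]
    exact (getLast?_stdWord_succ_ne d n).symm

theorem subst_stdWord_succ (d : ℕ → ℕ) (n : ℕ) (t : List Bool) :
    subst (stdWord d (n + 2)) (stdWord d (n + 1)) t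
      = subst (stdWord d (n + 1)) (stdWord d n) (stdMorph (d (n + 1)) t) := by
  rw [stdMorph, subst_subst]
  congr 1 <;> simp [subst_replicate_false, stdWord_add_two]

theorem subst_stdWord_two_one (d : ℕ → ℕ) (t : List Bool) :
    subst (stdWord d 2) (stdWord d 1) t = stdMorph (d 1) t := by
  rw [subst_stdWord_succ d 0]
  exact subst_false_true _

theorem stdWord_eq_subst (d : ℕ → ℕ) (n : ℕ) : ∀ k,
    stdWord d (n + 1 + k)
      = subst (stdWord d (n + 1)) (stdWord d n) (stdWord (fun i => d (n + i)) (k + 1))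
  | 0 => by simp [stdWord]
  | 1 => by
    rw [stdWord_two, stdWord_add_two]
    simp [subst_replicate_false]
  | k + 2 => by
    rw [show n + 1 + (k + 2) = n + 1 + k + 2 by omega, stdWord_add_two,
      show k + 2 + 1 = k + 1 + 2 by omega, stdWord_add_two, subst_append,
      subst_flatten_replicate, ← stdWord_eq_subst d n (k + 1), ← stdWord_eq_subst d n k,
      show n + (k + 1 + 1) = n + 1 + k + 1 by omega,
      show n + 1 + (k + 1) = n + 1 + k + 1 by omega]

def OnesIsolated (t : List Bool) : Prop :=
  t.IsChain fun a b => a = true → b = false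

theorem OnesIsolated.infix {s t : List Bool} (ht : OnesIsolated t) (h : s <:+: t) :
    OnesIsolated s :=
  List.IsChain.infix ht h

@[simp] theorem stdMorph_nil (q : ℕ) : stdMorph q [] = [] := rfl

@[simp] theorem stdMorph_cons (q : ℕ) (c : Bool) (t : List Bool) :
    stdMorph q (c :: t) = cond c [false] (List.replicate q false ++ [true]) ++ stdMorph q t :=
  rfl

@[simp] theorem stdMorph_append (q : ℕ) (s t : List Bool) :
    stdMorph q (s ++ t) = stdMorph q s ++ stdMorph q t :=
  subst_append _ _ s t

theorem head?_stdMorph {q : ℕ} (hq : 1 ≤ q) (t : List Bool) :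
    ∀ b ∈ (stdMorph q t).head?, b = false := by
  obtain ⟨p, rfl⟩ : ∃ p, q = p + 1 := ⟨q - 1, by omega⟩
  rcases t with _ | ⟨_ | _, t⟩ <;> simp [List.replicate_succ]

theorem onesIsolated_stdMorph {q : ℕ} (hq : 1 ≤ q) (t : List Bool) :
    OnesIsolated (stdMorph q t) := by
  induction t with
  | nil => exact List.isChain_nil
  | cons c t ih =>
    refine List.isChain_append.mpr ⟨?_, ih, fun _ _ b hb _ => head?_stdMorph hq t b hb⟩
    cases c
    · refine List.isChain_append.mpr
        ⟨List.isChain_replicate_of_rel _ (by simp), List.isChain_singleton _, ?_⟩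
      simp [List.getLast?_replicate]
    · exact List.isChain_singleton _

theorem onesIsolated_stdWord (d : ℕ → ℕ) (hd : ∀ i, 1 ≤ i → 0 < d i) :
    ∀ n, OnesIsolated (stdWord d n)
  | 0 | 1 => List.isChain_singleton _
  | n + 2 => by
    rw [show n + 2 = 1 + 1 + n by omega, stdWord_eq_subst d 1 n, subst_stdWord_two_one]
    exact onesIsolated_stdMorph (hd 1 le_rfl) _

theorem eq_replicate_of_append_cons_true_eq {q : ℕ} {x s : List Bool}
    (h : x ++ true :: s = List.replicate q false ++ [true]) : x = List.replicate q false := by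
  rcases List.append_eq_append_iff.mp h with ⟨as, hq, has⟩ | ⟨bs, hx, hbs⟩
  · rcases as with _ | ⟨b, as⟩
    · simpa using hq.symm
    · have : true ∈ List.replicate q false := by simp_all
      simp at this
  · rcases bs with _ | ⟨b, bs⟩
    · simpa using hx
    · simp at hbs

theorem replicate_append_ne_replicate_append_cons_true {k m : ℕ} {x y z : List Bool}
    (hx : x.length ≤ k) (hm : k < x.length + m) :
    x ++ List.replicate m false ++ y ≠ List.replicate k false ++ true :: z := by
  intro h
  have := congrArg (·[k]?) h
  simp [List.getElem?_append, show ¬k < x.length by omega,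
    show k - x.length < m by omega] at this

theorem exists_prefix_of_append_cons_true_eq_stdMorph {q : ℕ} : ∀ {t x y : List Bool},
    x ++ true :: y = stdMorph q t →
      ∃ t₁, t₁ ++ [false] <+: t ∧ x = stdMorph q t₁ ++ List.replicate q false
  | [], x, y, h => by simp at h
  | c :: t, x, y, h => by
    rw [stdMorph_cons] at h
    rcases List.append_eq_append_iff.mp h with ⟨_ | ⟨b, as⟩, hblk, has⟩ | ⟨bs, rfl, hbs⟩
    · obtain ⟨t₁, ht₁, hx⟩ :=
        exists_prefix_of_append_cons_true_eq_stdMorph (t := t) (x := []) (by simpa using has)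
      exact ⟨c :: t₁, List.cons_prefix_cons.mpr ⟨rfl, ht₁⟩, by simp [hblk, ← hx]⟩
    · obtain rfl : b = true := (List.cons_eq_cons.mp has).1.symm
      cases c
      · exact ⟨[], by simp, by simpa using eq_replicate_of_append_cons_true_eq hblk.symm⟩
      · have : true ∈ x ++ true :: as := by simp
        simp [← hblk] at this
    · obtain ⟨t₁, ht₁, rfl⟩ := exists_prefix_of_append_cons_true_eq_stdMorph hbs.symm
      exact ⟨c :: t₁, List.cons_prefix_cons.mpr ⟨rfl, ht₁⟩, by simp⟩

theorem not_replicate_infix_stdMorph (q : ℕ) : ∀ {t : List Bool}, OnesIsolated t →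
    ¬ List.replicate (q + 2) false <:+: stdMorph q t
  | [], _, h => by simp at h
  | c :: t, ht, ⟨x, y, h⟩ => by
    have ih := not_replicate_infix_stdMorph q (ht.infix (List.suffix_cons c t).isInfix)
    rw [stdMorph_cons, List.append_assoc] at h
    rcases List.append_eq_append_iff.mp h with ⟨_ | ⟨b, as⟩, hblk, has⟩ | ⟨bs, -, hbs⟩
    · exact ih ⟨[], y, by simpa using has⟩
    · have hx : x.length < (cond c [false] (List.replicate q false ++ [true])).length := by
        rw [hblk]; simp
      cases c
      · exact replicate_append_ne_replicate_append_cons_true (m := q + 2) (y := y)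
          (z := stdMorph q t) (by simp at hx; omega) (by omega)
          (by rw [List.append_assoc, h]; simp)
      · obtain rfl : x = [] := List.length_eq_zero_iff.mp (by simpa using hx)
        rcases t with _ | ⟨_ | _, t⟩
        · simp [List.replicate_succ] at h
        · exact replicate_append_ne_replicate_append_cons_true (x := []) (k := q + 1)
            (m := q + 2) (y := y) (z := stdMorph q t) (by simp) (by simp)
            (by rw [List.append_assoc, h, List.replicate_succ]; simp)
        · simp [OnesIsolated] at ht
    · exact ih ⟨bs, y, by simpa using hbs.symm⟩

theorem exists_prefix_of_stdMorph_eq {q : ℕ} {t u v : List Bool} {c : Bool}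
    (ht : OnesIsolated t) (h : stdMorph q t = u ++ List.replicate q false ++ c :: v) :
    ∃ t₁, t₁ <+: t ∧ u = stdMorph q t₁ := by
  cases c
  · rcases List.eq_nil_or_concat' u with rfl | ⟨u, _ | _, rfl⟩
    · exact ⟨[], List.nil_prefix, rfl⟩
    · refine absurd ⟨u, v, ?_⟩ (not_replicate_infix_stdMorph q ht)
      rw [h, List.replicate_succ', List.replicate_succ]
      simp
    · obtain ⟨t₁, ht₁, rfl⟩ := exists_prefix_of_append_cons_true_eq_stdMorph
        (x := u) (y := List.replicate q false ++ false :: v) (by rw [h]; simp)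
      exact ⟨t₁ ++ [false], ht₁, by simp⟩
  · obtain ⟨t₁, ht₁, hu⟩ := exists_prefix_of_append_cons_true_eq_stdMorph
      (x := u ++ List.replicate q false) (y := v) h.symm
    exact ⟨t₁, (List.prefix_append t₁ [false]).trans ht₁, List.append_cancel_right hu⟩

def IsSynchronizing (B C : List Bool) : Prop :=
  ∀ ⦃t x y : List Bool⦄, OnesIsolated t → x ++ B ++ y = subst B C t →
    ∃ t₁, t₁ <+: t ∧ x = subst B C t₁

section Synchronizing

variable {B C : List Bool}

theorem eq_singleton_false_of_length_subst_eq (hC : C ≠ []) (hlen : C.length < B.length)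
    {w : List Bool} (hw : OnesIsolated w) (h : (subst B C w).length = B.length) :
    w = [false] := by
  have hC₀ := List.length_pos_iff.mpr hC
  rcases w with _ | ⟨_ | _, w⟩
  · simp at h; omega
  · have hB : B ≠ [] := List.length_pos_iff.mp (by omega)
    simp only [subst_cons, cond_false, List.length_append] at h
    rw [eq_nil_of_subst_eq_nil hB hC (t := w) (List.length_eq_zero_iff.mp (by omega))]
  · rcases w with _ | ⟨_ | _, w⟩
    · simp at h; omega
    · simp at h; omega
    · simp [OnesIsolated] at hw

theorem IsSynchronizing.exists_eq_false_cons (hsync : IsSynchronizing B C) (hC : C ≠ [])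
    (hlen : C.length < B.length) {v z : List Bool} (hv : OnesIsolated v)
    (h : B ++ B ++ z = subst B C v) : ∃ v', v = false :: v' ∧ B ++ z = subst B C v' := by
  obtain ⟨w, ⟨v', rfl⟩, hw⟩ := hsync hv h
  obtain rfl : w = [false] := eq_singleton_false_of_length_subst_eq hC hlen
    (hv.infix (List.prefix_append w v').isInfix) (by rw [← hw])
  exact ⟨v', rfl, by simpa using h⟩

theorem IsSynchronizing.exists_eq_replicate_append (hsync : IsSynchronizing B C) (hC : C ≠ [])
    (hlen : C.length < B.length) : ∀ (k : ℕ) {v z : List Bool}, OnesIsolated v →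
      (List.replicate (k + 1) B).flatten ++ z = subst B C v →
      ∃ v', v = List.replicate k false ++ v' ∧ B ++ z = subst B C v'
  | 0, v, z, _, h => ⟨v, rfl, by simpa using h⟩
  | k + 1, v, z, hv, h => by
    obtain ⟨v', rfl, hv'⟩ := hsync.exists_eq_false_cons hC hlen hv
      (z := (List.replicate k B).flatten ++ z) (by simpa [List.replicate_succ] using h)
    obtain ⟨v'', rfl, hv''⟩ := hsync.exists_eq_replicate_append hC hlen k
      (hv.infix (List.suffix_cons false v').isInfix) (by simpa [List.replicate_succ] using hv')
    exact ⟨v'', by simp [List.replicate_succ], hv''⟩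

theorem IsSynchronizing.exists_eq_append_replicate_append (hsync : IsSynchronizing B C)
    (hC : C ≠ []) (hlen : C.length < B.length) {k : ℕ} {t x y : List Bool}
    (ht : OnesIsolated t) (h : x ++ (List.replicate (k + 1) B).flatten ++ y = subst B C t) :
    ∃ u v, t = u ++ List.replicate k false ++ v ∧ x = subst B C u ∧ B ++ y = subst B C v := by
  obtain ⟨u, ⟨r, rfl⟩, rfl⟩ := hsync ht (y := (List.replicate k B).flatten ++ y)
    (by simpa [List.replicate_succ] using h)
  obtain ⟨v, rfl, hv⟩ := hsync.exists_eq_replicate_append hC hlen k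
    (ht.infix (List.suffix_append u r).isInfix) (by simpa using h)
  exact ⟨u, v, by simp, rfl, hv⟩

end Synchronizing

theorem exists_eq_false_cons_of_stdWord_append_stdWord (d : ℕ → ℕ) (n : ℕ) {v y : List Bool}
    (hv : OnesIsolated v)
    (h : stdWord d (n + 1) ++ stdWord d n ++ y = subst (stdWord d (n + 1)) (stdWord d n) v) :
    ∃ v', v = false :: v' ∧ stdWord d n ++ y = subst (stdWord d (n + 1)) (stdWord d n) v' := by
  rcases v with _ | ⟨_ | _, v⟩
  · simp [stdWord_ne_nil] at h
  · exact ⟨v, rfl, by simpa using h⟩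
  · rcases v with _ | ⟨_ | _, v⟩
    · have hlen := congrArg List.length h
      have hpos := List.length_pos_iff.mpr (stdWord_ne_nil d (n + 1))
      simp at hlen
      omega
    · exfalso
      have hswap : stdWord d (n + 1) ++ stdWord d n = stdWord d n ++ stdWord d (n + 1) :=
        (List.append_inj (by simpa using h) (by simp [Nat.add_comm])).1
      have hlast := congrArg List.getLast? hswap
      simp only [List.getLast?_append_of_ne_nil _ (stdWord_ne_nil d _)] at hlast
      exact getLast?_stdWord_succ_ne d n hlast.symm
    · simp [OnesIsolated] at hv

theorem IsSynchronizing.stdWord_succ (d : ℕ → ℕ) (hd : ∀ i, 1 ≤ i → 0 < d i) {n : ℕ}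
    (hn : 1 ≤ n) (hsync : IsSynchronizing (stdWord d (n + 1)) (stdWord d n)) :
    IsSynchronizing (stdWord d (n + 2)) (stdWord d (n + 1)) := by
  intro t x y ht h
  obtain ⟨q, hq⟩ := Nat.exists_eq_add_one.mpr (hd (n + 1) (by omega))
  have hψ := onesIsolated_stdMorph (hd (n + 1) (by omega)) t
  rw [subst_stdWord_succ, stdWord_add_two] at h
  obtain ⟨u, v, hsplit, rfl, hv⟩ := hsync.exists_eq_append_replicate_append
    (stdWord_ne_nil d n) (length_stdWord_lt d hd hn) hψ (k := q) (y := stdWord d n ++ y)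
    (by rw [← hq]; simpa using h)
  obtain ⟨v', rfl, hv'⟩ := exists_eq_false_cons_of_stdWord_append_stdWord d n
    (hψ.infix ⟨u ++ List.replicate q false, [], by rw [hsplit, List.append_nil]⟩)
    (by simpa using hv)
  obtain ⟨c, v'', rfl⟩ : ∃ c v'', v' = c :: v'' := by
    rcases v' with _ | ⟨c, v''⟩
    · simp [stdWord_ne_nil] at hv'
    · exact ⟨c, v'', rfl⟩
  obtain ⟨t₁, ht₁, rfl⟩ := exists_prefix_of_stdMorph_eq ht (u := u) (v := v'') (c := c)
    (by rw [hsplit, hq, List.replicate_succ']; simp)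
  exact ⟨t₁, ht₁, (subst_stdWord_succ d n t₁).symm⟩

theorem isSynchronizing_stdWord (d : ℕ → ℕ) (hd : ∀ i, 1 ≤ i → 0 < d i) {n : ℕ}
    (hn : 1 ≤ n) : IsSynchronizing (stdWord d (n + 1)) (stdWord d n) := by
  induction n, hn using Nat.le_induction with
  | base =>
    intro t x y ht h
    rw [subst_stdWord_two_one, stdWord_two] at h
    obtain ⟨t₁, ht₁, rfl⟩ :=
      exists_prefix_of_stdMorph_eq ht (u := x) (v := y) (c := true) (by simpa using h.symm)
    exact ⟨t₁, ht₁, (subst_stdWord_two_one d t₁).symm⟩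
  | succ n hn ih => exact ih.stdWord_succ d hd hn

theorem exists_infix_of_mem_Fac (d : ℕ → ℕ) (hd : ∀ i, 1 ≤ i → 0 < d i) (n : ℕ)
    {w : List Bool} (hw : w ∈ Fac d) : ∃ t, OnesIsolated t ∧
      w <:+: subst (stdWord d (n + 1)) (stdWord d n) (stdMorph (d (n + 1)) t) := by
  obtain ⟨m, hm⟩ := hw
  refine ⟨_, onesIsolated_stdWord (fun i => d (n + 1 + i)) (fun i hi => hd _ (by omega)) (m + 1),
    ?_⟩
  rw [← subst_stdWord_succ, ← stdWord_eq_subst, show n + 1 + 1 + m = n + 1 + m + 1 by omega]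
  exact hm.trans (stdWord_add_one_prefix_of_le d hd (by omega)).isInfix

end Sturmian

open Sturmian

/-- If `a ∈ {0,1}` is the last symbol of the standard word `s_n` (`n ≥ 1`),
then the word `a s_n^{d_{n+1}+2}` is not an element of `Fac(d)`. -/
theorem last_letter_power_not_factor (d : ℕ → ℕ) (hd : ∀ i, 1 ≤ i → 0 < d i)
    (n : ℕ) (hn : 1 ≤ n) (a : Bool)
    (ha : (stdWord d (n + 1)).getLast? = some a) :
    a :: (List.replicate (d (n + 1) + 2) (stdWord d (n + 1))).flatten ∉ Fac d := by
  intro hmem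
  obtain ⟨t, ht, x, y, h⟩ := exists_infix_of_mem_Fac d hd n hmem
  have hsync := isSynchronizing_stdWord d hd hn
  obtain ⟨u, v, hsplit, hxu, -⟩ := hsync.exists_eq_append_replicate_append (stdWord_ne_nil d n)
    (length_stdWord_lt d hd hn) (onesIsolated_stdMorph (hd (n + 1) (by omega)) t)
    (x := x ++ [a]) (k := d (n + 1) + 1) (by simpa using h)
  rcases List.eq_nil_or_concat' u with rfl | ⟨u, _ | _, rfl⟩
  · simp at hxu
  · refine not_replicate_infix_stdMorph (d (n + 1)) ht ⟨u, v, ?_⟩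
    rw [hsplit]
    simp [List.replicate_succ]
  · have hlast := congrArg List.getLast? hxu
    simp [List.getLast?_append_of_ne_nil _ (stdWord_ne_nil d n)] at hlast
    exact getLast?_stdWord_succ_ne d n (ha.trans hlast)
end

section
/- For all natural numbers n and l with 1 ≤ l and l + 1 ≤ n, the identity ∑_{i=0}^{n−(l+1)} ⌊(n−i)/(l+1)⌋ = (1/2)·⌊n/(l+1)⌋·(n − l + 1 + (n mod (l+1))) holds. -/
/-!
Reflecting the summation index turns the sum into `∑_{j ≤ n} ⌊j/m⌋` with `m = l + 1` (the extra
terms `j < m` vanish). Writing `n = q m + r`, the range `[0, q m)` splits into `q` blocks of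
length `m` on which `⌊j/m⌋` is constantly `0, 1, …, q - 1`, contributing `m q (q - 1) / 2`, and
the remaining `r + 1` terms each equal `q`.
-/

open Finset

theorem sum_range_mul_add_div (m k c : ℕ) (hc : c ≤ m) :
    ∑ x ∈ range c, (k * m + x) / m = c * k := by
  rw [sum_congr rfl fun x hx => ?_, sum_const, card_range, smul_eq_mul]
  have hx : x < m := (mem_range.mp hx).trans_le hc
  rw [mul_comm, Nat.mul_add_div (by omega), Nat.div_eq_of_lt hx, add_zero]

theorem two_mul_sum_range_mul_div_add (m q : ℕ) :
    2 * ∑ j ∈ range (q * m), j / m + m * q = m * q * q := by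
  induction q with
  | zero => simp
  | succ q ih =>
    rw [add_one_mul, sum_range_add, sum_range_mul_add_div m q m le_rfl]
    linear_combination ih

theorem sum_range_succ_div (m n : ℕ) :
    ∑ j ∈ range (n + 1), j / m = ∑ j ∈ range (n / m * m), j / m + (n % m + 1) * (n / m) := by
  rcases Nat.eq_zero_or_pos m with rfl | hm
  · simp
  have hsplit : n + 1 = n / m * m + (n % m + 1) := by rw [← add_assoc, Nat.div_add_mod']
  rw [hsplit, sum_range_add, sum_range_mul_add_div m _ _ (Nat.mod_lt n hm)]

theorem sum_range_sub_div (m n : ℕ) :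
    ∑ i ∈ range (n - m + 1), (n - i) / m = ∑ j ∈ range (n + 1), j / m := by
  rw [← sum_range_reflect (fun j => j / m) (n + 1)]
  refine sum_subset (range_subset_range.mpr (by omega)) fun i hi hi' => ?_
  rw [mem_range] at hi hi'
  exact Nat.div_eq_of_lt (by omega)

theorem floor_sum_identity_general (n l : ℕ) :
    ((∑ i ∈ Finset.range (n - (l + 1) + 1), (n - i) / (l + 1) : ℕ) : ℚ) =
      (1 / 2 : ℚ) * ((n / (l + 1) : ℕ) : ℚ)
        * ((n : ℚ) - (l : ℚ) + 1 + ((n % (l + 1) : ℕ) : ℚ)) := by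
  have hblocks := two_mul_sum_range_mul_div_add (l + 1) (n / (l + 1))
  have hdiv := Nat.div_add_mod n (l + 1)
  rw [sum_range_sub_div, sum_range_succ_div]
  generalize ∑ j ∈ range (n / (l + 1) * (l + 1)), j / (l + 1) = S at hblocks ⊢
  generalize n / (l + 1) = q at hblocks hdiv ⊢
  generalize n % (l + 1) = r at hdiv ⊢
  subst hdiv
  have hblocks' : (2 * S + (l + 1) * q : ℚ) = (l + 1) * q * q := by exact_mod_cast hblocks
  push_cast
  linear_combination hblocks' / 2

/-- For `1 ≤ l` and `l + 1 ≤ n`,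
`∑_{i=0}^{n-(l+1)} ⌊(n-i)/(l+1)⌋ = (1/2) ⌊n/(l+1)⌋ (n - l + 1 + (n mod (l+1)))`. -/
theorem floor_sum_identity (n l : ℕ) (hl : 1 ≤ l) (hn : l + 1 ≤ n) :
    ((∑ i ∈ Finset.range (n - (l + 1) + 1), (n - i) / (l + 1) : ℕ) : ℚ) =
      (1 / 2 : ℚ) * ((n / (l + 1) : ℕ) : ℚ)
        * ((n : ℚ) - (l : ℚ) + 1 + ((n % (l + 1) : ℕ) : ℚ)) :=
  floor_sum_identity_general n l
end
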